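/- arXiv:2605.16851 — 5 statements merged into one kernel-verified Lean document; each statement's English description precedes it below -/
import Mathlib

section
/- (Theorem on two constants) Let D ⊂ ℂⁿ be a bounded α-regular domain, E ⊂ D, and let u be α-subharmonic on D with u ≤ r on E and u < R on D, where R > r. Then for all z ∈ D, u(z) ≤ R·(1 + ω*_α(z,E,D)) − r·ω*_α(z,E,D). -/
set_option maxHeartbeats 1000000


open MeasureTheory Filter Topology Complex Metric

noncomputable section

/-- Complex `n`-space. -/
abbrev Cn (n : ℕ) := Fin n → ℂ

/-- The Wirtinger derivative `∂f/∂z_j` of a (real-differentiable) function `f : ℂⁿ → ℂ`. -/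
noncomputable def wdz {n : ℕ} (j : Fin n) (f : Cn n → ℂ) (z : Cn n) : ℂ :=
  (fderiv ℝ f z (Pi.single j 1) - Complex.I * fderiv ℝ f z (Pi.single j Complex.I)) / 2

/-- The Wirtinger derivative `∂f/∂z̄_j` of a (real-differentiable) function `f : ℂⁿ → ℂ`. -/
noncomputable def wdzbar {n : ℕ} (j : Fin n) (f : Cn n → ℂ) (z : Cn n) : ℂ :=
  (fderiv ℝ f z (Pi.single j 1) + Complex.I * fderiv ℝ f z (Pi.single j Complex.I)) / 2

/-- The square of the Euclidean norm `|z|² = ∑ |z_i|²` on `ℂⁿ`. -/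
noncomputable def sqNorm {n : ℕ} (z : Cn n) : ℝ := ∑ i, Complex.normSq (z i)

/-- A closed, strictly positive differential form `α` of bidegree `(n-1, n-1)` with `C¹`
coefficients on `ℂⁿ`, recorded through its normalized coefficient matrix:  `coeff j k` is
the Hermitian positive-definite matrix `A_{jk}` such that
`dd^c u ∧ α = (∑_{j,k} A_{jk} ∂²u/∂z_j∂z̄_k) dV`.  In these terms closedness of `α`
reads `∑_j ∂A_{jk}/∂z_j = 0` for every `k` (the conjugate identity follows by
Hermitian symmetry). -/
structure AlphaForm (n : ℕ) where
  coeff : Fin n → Fin n → Cn n → ℂ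
  contDiff : ∀ j k, ContDiff ℝ 1 (coeff j k)
  hermitian : ∀ j k z, coeff k j z = starRingEnd ℂ (coeff j k z)
  strictlyPositive : ∀ z : Cn n, ∀ ξ : Fin n → ℂ, ξ ≠ 0 →
    0 < (∑ j, ∑ k, coeff j k z * ξ j * starRingEnd ℂ (ξ k)).re
  closed : ∀ k, ∀ z : Cn n, (∑ j, wdz j (coeff j k) z) = 0

/-- The second order operator `f ↦ ∑_{j,k} A_{jk} ∂²f/∂z_j∂z̄_k` representing the
top-degree form `dd^c f ∧ α` (with respect to Lebesgue measure). -/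
noncomputable def alphaOp {n : ℕ} (A : AlphaForm n) (f : Cn n → ℂ) (z : Cn n) : ℂ :=
  ∑ j, ∑ k, A.coeff j k z * wdzbar k (wdz j f) z

/-- The operator `alphaOp` applied to a real-valued function, returning the real part. -/
noncomputable def alphaOpR {n : ℕ} (A : AlphaForm n) (ω : Cn n → ℝ) (z : Cn n) : ℝ :=
  (alphaOp A (fun w => (ω w : ℂ)) z).re

/-- `u : ℂⁿ → EReal` is `α`-subharmonic on `D`: it is finite-or-`-∞`, strongly upper
semicontinuous on `D`, locally integrable on `D`, and the current `dd^c u ∧ α` is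
positive, i.e. `∫_D u · (α ∧ dd^c ω) ≥ 0` for every nonnegative test function `ω` on `D`. -/
def IsAlphaSubharmonicE {n : ℕ} (A : AlphaForm n) (D : Set (Cn n)) (u : Cn n → EReal) : Prop :=
  (∀ z ∈ D, u z ≠ ⊤) ∧
  UpperSemicontinuousOn u D ∧
  (∀ z₀ ∈ D, ∀ S : Set (Cn n),
      (∃ N ∈ 𝓝 z₀, volume (N \ S) = 0) → Filter.limsup u (𝓝[S] z₀) = u z₀) ∧
  LocallyIntegrableOn (fun z => (u z).toReal) D volume ∧
  ∀ ω : Cn n → ℝ, ContDiff ℝ (⊤ : ℕ∞) ω → HasCompactSupport ω → tsupport ω ⊆ D →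
    (∀ z, 0 ≤ ω z) → 0 ≤ ∫ z in D, (u z).toReal * alphaOpR A ω z

/-- A real-valued function is `α`-subharmonic on `D` if it is so as an `EReal`-valued
function. -/
def IsAlphaSubharmonic {n : ℕ} (A : AlphaForm n) (D : Set (Cn n)) (u : Cn n → ℝ) : Prop :=
  IsAlphaSubharmonicE A D (fun z => (u z : EReal))

/-- `h` is `α`-harmonic on the open set `U`: `dd^c h ∧ α = 0` there, in the sense of
currents. -/
def IsAlphaHarmonicOn {n : ℕ} (A : AlphaForm n) (U : Set (Cn n)) (h : Cn n → ℝ) : Prop :=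
  LocallyIntegrableOn h U volume ∧
  ∀ ω : Cn n → ℝ, ContDiff ℝ (⊤ : ℕ∞) ω → HasCompactSupport ω → tsupport ω ⊆ U →
    (∫ z in U, h z * alphaOpR A ω z) = 0

/-- `u` is strictly `α`-subharmonic on `G`: for every compact subdomain `G' ⋐ G` there is
`ε > 0` with `u - ε|z|²` `α`-subharmonic on `G'`. -/
def IsStrictlyAlphaSubharmonic {n : ℕ} (A : AlphaForm n) (G : Set (Cn n)) (u : Cn n → ℝ) :
    Prop :=
  ∀ G' : Set (Cn n), IsOpen G' → IsCompact (closure G') → closure G' ⊆ G →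
    ∃ ε > (0 : ℝ), IsAlphaSubharmonic A G' (fun z => u z - ε * sqNorm z)

/-- `D` is a bounded `α`-regular domain: a bounded domain carrying a negative
`α`-subharmonic exhaustion `ρ` with boundary limit `0`. -/
def IsAlphaRegularDomain {n : ℕ} (A : AlphaForm n) (D : Set (Cn n)) : Prop :=
  IsOpen D ∧ IsConnected D ∧ Bornology.IsBounded D ∧
  ∃ ρ : Cn n → ℝ, IsAlphaSubharmonic A D ρ ∧ (∀ z ∈ D, ρ z < 0) ∧
    ∀ ζ ∈ frontier D, Filter.Tendsto ρ (𝓝[D] ζ) (𝓝 0)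

/-- `D` is a strongly `α`-regular domain: `D = {ρ < 0}` for some `ρ` which is `C²` and
strictly `α`-subharmonic on a neighborhood `D⁺` of `closure D`. -/
def IsStronglyAlphaRegularDomain {n : ℕ} (A : AlphaForm n) (D : Set (Cn n)) : Prop :=
  IsOpen D ∧ IsConnected D ∧ Bornology.IsBounded D ∧
  ∃ Dp : Set (Cn n), IsOpen Dp ∧ closure D ⊆ Dp ∧
    ∃ ρ : Cn n → ℝ, ContDiffOn ℝ 2 ρ Dp ∧ IsStrictlyAlphaSubharmonic A Dp ρ ∧
      D = {z ∈ Dp | ρ z < 0}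

/-- The class `U(E, D, ψ)` of `α`-subharmonic functions `u` on `D` with `u ≤ ψ` on `E`
and `u < 0` on `D`. -/
def Uclass {n : ℕ} (A : AlphaForm n) (E D : Set (Cn n)) (ψ : Cn n → ℝ) :
    Set (Cn n → ℝ) :=
  {u | IsAlphaSubharmonic A D u ∧ (∀ z ∈ E, u z ≤ ψ z) ∧ ∀ z ∈ D, u z < 0}

/-- The weighted extremal function `ω_α(z, E, D, ψ)`. -/
noncomputable def omegaW {n : ℕ} (A : AlphaForm n) (E D : Set (Cn n)) (ψ : Cn n → ℝ)
    (z : Cn n) : ℝ :=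
  sSup ((fun u : Cn n → ℝ => u z) '' Uclass A E D ψ)

/-- The weighted `α`-subharmonic measure `ω*_α(z, E, D, ψ)`: the upper semicontinuous
regularization of `ω_α(·, E, D, ψ)`. -/
noncomputable def omegaWStar {n : ℕ} (A : AlphaForm n) (E D : Set (Cn n)) (ψ : Cn n → ℝ)
    (z : Cn n) : ℝ :=
  Filter.limsup (omegaW A E D ψ) (𝓝 z)

/-- The (unweighted) extremal function `ω_α(z, E, D)`. -/
noncomputable def omega0 {n : ℕ} (A : AlphaForm n) (E D : Set (Cn n)) : Cn n → ℝ :=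
  omegaW A E D (fun _ => (-1 : ℝ))

/-- The (unweighted) `α`-subharmonic measure `ω*_α(z, E, D)`. -/
noncomputable def omega0Star {n : ℕ} (A : AlphaForm n) (E D : Set (Cn n)) : Cn n → ℝ :=
  omegaWStar A E D (fun _ => (-1 : ℝ))

/-- `S` is `α`-polar in `D`: there is an `α`-subharmonic `ρ` on `D`, not identically
`-∞`, with `ρ = -∞` on `S`. -/
def IsAlphaPolar {n : ℕ} (A : AlphaForm n) (D S : Set (Cn n)) : Prop :=
  ∃ ρ : Cn n → EReal, IsAlphaSubharmonicE A D ρ ∧ (∃ z ∈ D, ρ z ≠ ⊥) ∧ ∀ z ∈ S, ρ z = ⊥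

/-- `u` is plurisubharmonic on `D`: upper semicontinuous, locally integrable, and with
positive semidefinite complex Hessian in the sense of distributions. -/
def IsPlurisubharmonic {n : ℕ} (D : Set (Cn n)) (u : Cn n → ℝ) : Prop :=
  UpperSemicontinuousOn u D ∧ LocallyIntegrableOn u D volume ∧
  ∀ ξ : Fin n → ℂ, ∀ ω : Cn n → ℝ, ContDiff ℝ (⊤ : ℕ∞) ω → HasCompactSupport ω →
    tsupport ω ⊆ D → (∀ z, 0 ≤ ω z) →
    0 ≤ ∫ z in D, u z *
      (∑ j, ∑ k, ξ j * starRingEnd ℂ (ξ k) * wdzbar k (wdz j (fun w => (ω w : ℂ))) z).re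

/-- The class `U(E,D)` for the plurisubharmonic measure. -/
def UclassPsh {n : ℕ} (E D : Set (Cn n)) : Set (Cn n → ℝ) :=
  {u | IsPlurisubharmonic D u ∧ (∀ z ∈ E, u z ≤ -1) ∧ ∀ z ∈ D, u z < 0}

/-- The plurisubharmonic extremal function `ω(z, E, D)`. -/
noncomputable def omegaPsh {n : ℕ} (E D : Set (Cn n)) (z : Cn n) : ℝ :=
  sSup ((fun u : Cn n → ℝ => u z) '' UclassPsh E D)

/-- The plurisubharmonic measure `ω*(z, E, D)`. -/
noncomputable def omegaPshStar {n : ℕ} (E D : Set (Cn n)) (z : Cn n) : ℝ :=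
  Filter.limsup (omegaPsh E D) (𝓝 z)

end


noncomputable section TwoConstantsHelpers

open MeasureTheory Filter Topology Complex Metric

variable {n : ℕ}

lemma continuous_dirderiv {f : Cn n → ℂ} (hf : ContDiff ℝ 1 f) (v : Cn n) :
    Continuous (fun z => fderiv ℝ f z v) :=
  (hf.continuous_fderiv one_ne_zero).clm_apply continuous_const

lemma contDiff_dirderiv {f : Cn n → ℂ} (hf : ContDiff ℝ (⊤ : ℕ∞) f) (v : Cn n) :
    ContDiff ℝ (⊤ : ℕ∞) (fun z => fderiv ℝ f z v) :=
  (hf.fderiv_right (by simp)).clm_apply contDiff_const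

lemma continuous_wdz {f : Cn n → ℂ} (hf : ContDiff ℝ 1 f) (j : Fin n) :
    Continuous (wdz j f) :=
  (((continuous_dirderiv hf _).sub
    (continuous_const.mul (continuous_dirderiv hf _)))).div_const 2

lemma continuous_wdzbar {f : Cn n → ℂ} (hf : ContDiff ℝ 1 f) (j : Fin n) :
    Continuous (wdzbar j f) :=
  (((continuous_dirderiv hf _).add
    (continuous_const.mul (continuous_dirderiv hf _)))).div_const 2

lemma contDiff_wdz {f : Cn n → ℂ} (hf : ContDiff ℝ (⊤ : ℕ∞) f) (j : Fin n) :
    ContDiff ℝ (⊤ : ℕ∞) (wdz j f) :=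
  (((contDiff_dirderiv hf _).sub
    (contDiff_const.mul (contDiff_dirderiv hf _)))).div_const 2

lemma contDiff_wdzbar {f : Cn n → ℂ} (hf : ContDiff ℝ (⊤ : ℕ∞) f) (j : Fin n) :
    ContDiff ℝ (⊤ : ℕ∞) (wdzbar j f) :=
  (((contDiff_dirderiv hf _).add
    (contDiff_const.mul (contDiff_dirderiv hf _)))).div_const 2

lemma eventually_zero_of_nmem_tsupport {f : Cn n → ℂ} {z : Cn n} (h : z ∉ tsupport f) :
    f =ᶠ[𝓝 z] 0 := by
  have : ∀ᶠ w in 𝓝 z, w ∈ (tsupport f)ᶜ :=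
    (isClosed_tsupport f).isOpen_compl.eventually_mem h
  exact this.mono fun w hw => image_eq_zero_of_notMem_tsupport hw

lemma wdz_eq_zero_of_eventually {f : Cn n → ℂ} {z : Cn n} (h : f =ᶠ[𝓝 z] 0) (j : Fin n) :
    wdz j f z = 0 := by
  have h0 : fderiv ℝ f z = fderiv ℝ (fun _ : Cn n => (0:ℂ)) z := h.fderiv_eq
  simp [wdz, h0, fderiv_const]

lemma wdzbar_eq_zero_of_eventually {f : Cn n → ℂ} {z : Cn n} (h : f =ᶠ[𝓝 z] 0) (j : Fin n) :
    wdzbar j f z = 0 := by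
  have h0 : fderiv ℝ f z = fderiv ℝ (fun _ : Cn n => (0:ℂ)) z := h.fderiv_eq
  simp [wdzbar, h0, fderiv_const]

lemma wdz_eq_zero_of_nmem_tsupport {f : Cn n → ℂ} {z : Cn n} (h : z ∉ tsupport f) (j : Fin n) :
    wdz j f z = 0 := wdz_eq_zero_of_eventually (eventually_zero_of_nmem_tsupport h) j

lemma wdzbar_eq_zero_of_nmem_tsupport {f : Cn n → ℂ} {z : Cn n} (h : z ∉ tsupport f) (j : Fin n) :
    wdzbar j f z = 0 := wdzbar_eq_zero_of_eventually (eventually_zero_of_nmem_tsupport h) j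

lemma hasCompactSupport_wdz {f : Cn n → ℂ} (hf : HasCompactSupport f) (j : Fin n) :
    HasCompactSupport (wdz j f) :=
  HasCompactSupport.intro hf fun x hx => wdz_eq_zero_of_nmem_tsupport hx j

lemma hasCompactSupport_wdzbar {f : Cn n → ℂ} (hf : HasCompactSupport f) (j : Fin n) :
    HasCompactSupport (wdzbar j f) :=
  HasCompactSupport.intro hf fun x hx => wdzbar_eq_zero_of_nmem_tsupport hx j

lemma fderiv_conj {f : Cn n → ℂ} {z : Cn n} (hf : DifferentiableAt ℝ f z) (v : Cn n) :
    fderiv ℝ (fun w => (starRingEnd ℂ) (f w)) z v = (starRingEnd ℂ) (fderiv ℝ f z v) := by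
  have : fderiv ℝ (⇑Complex.conjCLE ∘ f) z
      = (Complex.conjCLE : ℂ ≃L[ℝ] ℂ).toContinuousLinearMap.comp (fderiv ℝ f z) := by
    rw [fderiv_comp z (Complex.conjCLE.differentiableAt) hf]
    rw [ContinuousLinearEquiv.fderiv]
  exact DFunLike.congr_fun this v

lemma conj_wdzbar {f : Cn n → ℂ} {z : Cn n} (hf : DifferentiableAt ℝ f z) (k : Fin n) :
    (starRingEnd ℂ) (wdzbar k f z) = wdz k (fun w => (starRingEnd ℂ) (f w)) z := by
  simp only [wdz, wdzbar, map_div₀, map_add, map_mul, fderiv_conj hf]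
  simp [Complex.conj_I, map_ofNat]
  try ring

lemma conj_wdz {f : Cn n → ℂ} {z : Cn n} (hf : DifferentiableAt ℝ f z) (k : Fin n) :
    (starRingEnd ℂ) (wdz k f z) = wdzbar k (fun w => (starRingEnd ℂ) (f w)) z := by
  simp only [wdz, wdzbar, map_div₀, map_sub, map_mul, fderiv_conj hf]
  simp [Complex.conj_I, map_ofNat]
  try ring

lemma integrable_mul_cc {f g : Cn n → ℂ} (hf : Continuous f) (hg : Continuous g)
    (hgs : HasCompactSupport g) : Integrable (fun z => f z * g z) (volume : Measure (Cn n)) :=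
  (hf.mul hg).integrable_of_hasCompactSupport (hgs.mul_left)

/-- Directional integration by parts on `ℂⁿ`. -/
lemma ibp_dir {f g : Cn n → ℂ} (hf : ContDiff ℝ 1 f) (hg : ContDiff ℝ 1 g)
    (hgs : HasCompactSupport g) (v : Cn n) :
    ∫ z, f z * fderiv ℝ g z v = - ∫ z, fderiv ℝ f z v * g z := by
  have hgd : HasCompactSupport (fun z => fderiv ℝ g z v) := by
    apply HasCompactSupport.intro hgs
    intro x hx
    have h0 : fderiv ℝ g x = fderiv ℝ (fun _ : Cn n => (0:ℂ)) x :=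
      (eventually_zero_of_nmem_tsupport hx).fderiv_eq
    simp [h0]
  exact integral_mul_fderiv_eq_neg_fderiv_mul_of_integrable
    (integrable_mul_cc (continuous_dirderiv hf v) hg.continuous hgs)
    (integrable_mul_cc hf.continuous (continuous_dirderiv hg v) hgd)
    (integrable_mul_cc hf.continuous hg.continuous hgs)
    (fun x _ => hf.differentiable one_ne_zero x) (fun x _ => hg.differentiable one_ne_zero x)

/-- Integration by parts for the Wirtinger derivative `wdz`. -/
lemma ibp_wdz {f g : Cn n → ℂ} (hf : ContDiff ℝ 1 f) (hg : ContDiff ℝ 1 g)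
    (hgs : HasCompactSupport g) (j : Fin n) :
    ∫ z, f z * wdz j g z = - ∫ z, wdz j f z * g z := by
  have h1 := ibp_dir hf hg hgs (Pi.single j 1)
  have h2 := ibp_dir hf hg hgs (Pi.single j Complex.I)
  have hgd1 : HasCompactSupport (fun z => fderiv ℝ g z (Pi.single j 1)) := by
    apply HasCompactSupport.intro hgs
    intro x hx
    have h0 : fderiv ℝ g x = fderiv ℝ (fun _ : Cn n => (0:ℂ)) x :=
      (eventually_zero_of_nmem_tsupport hx).fderiv_eq
    simp [h0]
  have hgdI : HasCompactSupport (fun z => fderiv ℝ g z (Pi.single j Complex.I)) := by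
    apply HasCompactSupport.intro hgs
    intro x hx
    have h0 : fderiv ℝ g x = fderiv ℝ (fun _ : Cn n => (0:ℂ)) x :=
      (eventually_zero_of_nmem_tsupport hx).fderiv_eq
    simp [h0]
  have e1 : (fun z => f z * wdz j g z)
      = fun z => (f z * fderiv ℝ g z (Pi.single j 1)
          - Complex.I * (f z * fderiv ℝ g z (Pi.single j Complex.I))) / 2 := by
    funext z; simp only [wdz]; ring
  have e2 : (fun z => wdz j f z * g z)
      = fun z => (fderiv ℝ f z (Pi.single j 1) * g z
          - Complex.I * (fderiv ℝ f z (Pi.single j Complex.I) * g z)) / 2 := by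
    funext z; simp only [wdz]; ring
  have i1 : Integrable (fun z => f z * fderiv ℝ g z (Pi.single j 1)) volume :=
    integrable_mul_cc hf.continuous (continuous_dirderiv hg _) hgd1
  have i2 : Integrable (fun z => f z * fderiv ℝ g z (Pi.single j Complex.I)) volume :=
    integrable_mul_cc hf.continuous (continuous_dirderiv hg _) hgdI
  have i3 : Integrable (fun z => fderiv ℝ f z (Pi.single j 1) * g z) volume :=
    integrable_mul_cc (continuous_dirderiv hf _) hg.continuous hgs
  have i4 : Integrable (fun z => fderiv ℝ f z (Pi.single j Complex.I) * g z) volume :=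
    integrable_mul_cc (continuous_dirderiv hf _) hg.continuous hgs
  rw [e1, e2]
  simp only [div_eq_mul_inv]
  rw [integral_mul_const, integral_mul_const,
    integral_sub i1 (i2.const_mul _), integral_sub i3 (i4.const_mul _),
    integral_const_mul, integral_const_mul, h1, h2]
  ring

lemma alphaOpR_eq_zero_of_nmem (A : AlphaForm n) {ω : Cn n → ℝ} {z : Cn n}
    (hz : z ∉ tsupport ω) : alphaOpR A ω z = 0 := by
  set Ω : Cn n → ℂ := fun w => (ω w : ℂ) with hΩdef
  have hts : tsupport Ω ⊆ tsupport ω := by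
    apply closure_mono
    intro w hw
    simp only [Function.mem_support, hΩdef] at hw ⊢
    exact fun h => hw (by simp [h])
  have hzΩ : z ∉ tsupport Ω := fun h => hz (hts h)
  have hev : ∀ j : Fin n, wdz j Ω =ᶠ[𝓝 z] 0 := by
    intro j
    have : ∀ᶠ w in 𝓝 z, w ∈ (tsupport Ω)ᶜ :=
      (isClosed_tsupport Ω).isOpen_compl.eventually_mem hzΩ
    exact this.mono fun w hw => wdz_eq_zero_of_nmem_tsupport hw j
  have h0 : ∀ j k : Fin n, wdzbar k (wdz j Ω) z = 0 :=
    fun j k => wdzbar_eq_zero_of_eventually (hev j) k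
  simp [alphaOpR, alphaOp, show ∀ j k : Fin n, wdzbar k (wdz j (fun w => (ω w : ℂ))) z = 0 from h0]

lemma continuous_alphaOpR (A : AlphaForm n) {ω : Cn n → ℝ} (hω : ContDiff ℝ (⊤ : ℕ∞) ω) :
    Continuous (alphaOpR A ω) := by
  have hΩ : ContDiff ℝ (⊤ : ℕ∞) (fun w => ((ω w : ℝ) : ℂ)) := Complex.ofRealCLM.contDiff.comp hω
  apply Complex.continuous_re.comp
  apply continuous_finset_sum
  intro j _
  apply continuous_finset_sum
  intro k _
  exact (A.contDiff j k).continuous.mul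
    (continuous_wdzbar ((contDiff_wdz hΩ j).of_le (by simp)) k)

/-- Constants are `α`-harmonic: the total integral of `dd^c ω ∧ α` vanishes. -/
lemma integral_alphaOpR_eq_zero (A : AlphaForm n) (D : Set (Cn n)) (ω : Cn n → ℝ)
    (hω : ContDiff ℝ (⊤ : ℕ∞) ω) (hsupp : HasCompactSupport ω) (hsub : tsupport ω ⊆ D) :
    ∫ z in D, alphaOpR A ω z = 0 := by
  set Ω : Cn n → ℂ := fun w => (ω w : ℂ) with hΩdef
  have hΩ : ContDiff ℝ (⊤ : ℕ∞) Ω := Complex.ofRealCLM.contDiff.comp hω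
  have hΩs : HasCompactSupport Ω :=
    HasCompactSupport.comp_left (g := fun r : ℝ => (r : ℂ)) hsupp (by simp)
  rw [setIntegral_eq_integral_of_forall_compl_eq_zero
    (fun z hz => alphaOpR_eq_zero_of_nmem A (fun h => hz (hsub h)))]
  have hWsm : ∀ j : Fin n, ContDiff ℝ (⊤ : ℕ∞) (wdz j Ω) := fun j => contDiff_wdz hΩ j
  have hGsm : ∀ j : Fin n, ContDiff ℝ (⊤ : ℕ∞) (wdzbar j Ω) := fun j => contDiff_wdzbar hΩ j
  have hGs : ∀ j : Fin n, HasCompactSupport (wdzbar j Ω) :=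
    fun j => hasCompactSupport_wdzbar hΩs j
  have hpt : ∀ (j k : Fin n) (z : Cn n),
      (A.coeff j k z * wdzbar k (wdz j Ω) z).re
        = (A.coeff k j z * wdz k (wdzbar j Ω) z).re := by
    intro j k z
    have h1 : (starRingEnd ℂ) (wdzbar k (wdz j Ω) z)
        = wdz k (fun w => (starRingEnd ℂ) (wdz j Ω w)) z :=
      conj_wdzbar (((hWsm j).differentiable (by simp)).differentiableAt) k
    have h2 : (fun w => (starRingEnd ℂ) (wdz j Ω w)) = wdzbar j Ω := by
      funext w
      rw [conj_wdz ((hΩ.differentiable (by simp)).differentiableAt) j]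
      congr 1
      funext x
      simp [hΩdef]
    rw [← Complex.conj_re (A.coeff j k z * wdzbar k (wdz j Ω) z), map_mul,
      ← A.hermitian j k z, h1, h2]
  have hint : ∀ j k : Fin n,
      Integrable (fun z => A.coeff k j z * wdz k (wdzbar j Ω) z) volume := by
    intro j k
    exact integrable_mul_cc (A.contDiff k j).continuous
      (continuous_wdz ((hGsm j).of_le (by simp)) k)
      (hasCompactSupport_wdz (hGs j) k)
  have hexp : (fun z => alphaOpR A ω z)
      = fun z => ∑ j, ∑ k, (A.coeff k j z * wdz k (wdzbar j Ω) z).re := by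
    funext z
    simp only [alphaOpR, alphaOp, Complex.re_sum]
    exact Finset.sum_congr rfl fun j _ => Finset.sum_congr rfl fun k _ => hpt j k z
  rw [hexp]
  have hint_re : ∀ j k : Fin n,
      Integrable (fun z => (A.coeff k j z * wdz k (wdzbar j Ω) z).re) volume :=
    fun j k => (hint j k).re
  rw [integral_finset_sum _ (fun j _ => integrable_finset_sum _
    (fun k _ => (hint_re j k)))]
  apply Finset.sum_eq_zero
  intro j _
  rw [integral_finset_sum _ (fun k _ => hint_re j k)]
  have : ∀ k : Fin n, ∫ z, (A.coeff k j z * wdz k (wdzbar j Ω) z).re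
      = ((∫ z, A.coeff k j z * wdz k (wdzbar j Ω) z : ℂ)).re :=
    fun k => integral_re (hint j k)
  simp only [this]
  rw [← Complex.re_sum]
  have hsum : (∑ k, ∫ z, A.coeff k j z * wdz k (wdzbar j Ω) z)
      = - ∫ z, (∑ k, wdz k (A.coeff k j) z) * wdzbar j Ω z := by
    have e1 : ∀ k : Fin n, (∫ z, A.coeff k j z * wdz k (wdzbar j Ω) z)
        = - ∫ z, wdz k (A.coeff k j) z * wdzbar j Ω z := by
      intro k
      exact ibp_wdz (A.contDiff k j) ((hGsm j).of_le (by simp)) (hGs j) k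
    simp only [e1]
    rw [Finset.sum_neg_distrib]
    congr 1
    rw [← integral_finset_sum]
    · congr 1; funext z; rw [Finset.sum_mul]
    · intro k _
      exact integrable_mul_cc (continuous_wdz (A.contDiff k j) k)
        ((hGsm j).continuous) (hGs j)
  rw [hsum]
  have hcl : ∀ z : Cn n, (∑ k, wdz k (A.coeff k j) z) = 0 := fun z => A.closed j z
  simp [hcl]

/-- An increasing affine image of an `α`-subharmonic function is `α`-subharmonic. -/
lemma isAlphaSubharmonic_affine (A : AlphaForm n) {D : Set (Cn n)} (hD : IsOpen D)
    {u : Cn n → ℝ} (hu : IsAlphaSubharmonic A D u) {c d : ℝ} (hc : 0 < c) :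
    IsAlphaSubharmonic A D (fun z => c * u z + d) := by
  obtain ⟨hne, husc, hlim, hloc, hposint⟩ := hu
  have hloc' : LocallyIntegrableOn u D volume := by
    simpa [EReal.toReal_coe] using hloc
  have key : ∀ (t : ℝ) (w : Cn n), c * u w + d < t ↔ u w < (t - d) / c := by
    intro t w
    rw [lt_div_iff₀ hc]
    constructor <;> intro h <;> nlinarith
  refine ⟨fun z _ => EReal.coe_ne_top _, ?_, ?_, ?_, ?_⟩
  · -- upper semicontinuity
    intro x hx y hy
    induction y using EReal.rec with
    | bot => exact absurd hy (by simp)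
    | coe t =>
      rw [EReal.coe_lt_coe_iff, key t x] at hy
      have h1 : ((u x : ℝ) : EReal) < (((t - d) / c : ℝ) : EReal) :=
        EReal.coe_lt_coe_iff.mpr hy
      filter_upwards [husc x hx _ h1] with w hw
      rw [EReal.coe_lt_coe_iff] at hw ⊢
      exact (key t w).mpr hw
    | top => exact Filter.Eventually.of_forall fun _ => EReal.coe_lt_top _
  · -- strong upper semicontinuity (limsup condition)
    intro z₀ hz₀ S hS
    have h0 := hlim z₀ hz₀ S hS
    have hnb : (𝓝[S] z₀).NeBot := by
      rcases (𝓝[S] z₀).eq_or_neBot with h | h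
      · rw [h, Filter.limsup_bot] at h0
        exact absurd h0.symm (EReal.coe_ne_bot _)
      · exact h
    apply le_antisymm
    · by_contra hlt
      push_neg at hlt
      obtain ⟨q, hq1, hq2⟩ := EReal.exists_rat_btwn_of_lt hlt
      set t : ℝ := (q : ℝ)
      have hfreq : ∃ᶠ w in 𝓝[S] z₀, (((t - d) / c : ℝ) : EReal) ≤ (u w : EReal) := by
        have := Filter.frequently_lt_of_lt_limsup (by isBoundedDefault) hq2
        apply this.mono
        intro w hw
        rw [EReal.coe_lt_coe_iff] at hw
        rw [EReal.coe_le_coe_iff]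
        by_contra hcon
        push_neg at hcon
        exact absurd ((key t w).mpr hcon) (by linarith)
      have hle : (((t - d) / c : ℝ) : EReal) ≤ Filter.limsup (fun z => (u z : EReal)) (𝓝[S] z₀) :=
        Filter.le_limsup_of_frequently_le hfreq
      rw [h0, EReal.coe_le_coe_iff] at hle
      have ht : c * u z₀ + d < t := EReal.coe_lt_coe_iff.mp hq1
      rw [key t z₀] at ht
      exact absurd hle (not_le.mpr ht)
    · by_contra hlt
      push_neg at hlt
      obtain ⟨q, hq1, hq2⟩ := EReal.exists_rat_btwn_of_lt hlt
      set t : ℝ := (q : ℝ)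
      have hev : ∀ᶠ w in 𝓝[S] z₀, (u w : EReal) ≤ (((t - d) / c : ℝ) : EReal) := by
        have := Filter.eventually_lt_of_limsup_lt hq1
        apply this.mono
        intro w hw
        rw [EReal.coe_lt_coe_iff] at hw
        exact EReal.coe_le_coe_iff.mpr (le_of_lt ((key t w).mp hw))
      have hle : Filter.limsup (fun z => (u z : EReal)) (𝓝[S] z₀)
          ≤ (((t - d) / c : ℝ) : EReal) := Filter.limsup_le_of_le (by isBoundedDefault) hev
      rw [h0, EReal.coe_le_coe_iff] at hle
      have ht : (t : EReal) < ((c * u z₀ + d : ℝ) : EReal) := hq2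
      rw [EReal.coe_lt_coe_iff] at ht
      have hgt : (t - d) / c < u z₀ := by rw [div_lt_iff₀ hc]; nlinarith
      exact absurd hle (not_le.mpr hgt)
  · -- local integrability
    intro x hx
    obtain ⟨t, ht, hint⟩ := hloc' x hx
    refine ⟨t ∩ Metric.ball x 1,
      Filter.inter_mem ht (mem_nhdsWithin_of_mem_nhds (Metric.ball_mem_nhds x one_pos)), ?_⟩
    have h1 : IntegrableOn u (t ∩ Metric.ball x 1) volume :=
      hint.mono_set Set.inter_subset_left
    have h2 : IntegrableOn (fun _ : Cn n => d) (t ∩ Metric.ball x 1) volume :=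
      (integrableOn_const_iff (C := d)).mpr (Or.inr
        (lt_of_le_of_lt (measure_mono Set.inter_subset_right) measure_ball_lt_top))
    have h3 : IntegrableOn (fun z => c * u z + d) (t ∩ Metric.ball x 1) volume :=
      (h1.const_mul c).add h2
    simpa only [EReal.toReal_coe] using h3
  · -- positivity of the current
    intro ω hω hsupp hsub hωpos
    simp only [EReal.toReal_coe]
    set φ : Cn n → ℝ := alphaOpR A ω with hφdef
    have hA0 : ∫ z in D, φ z = 0 := integral_alphaOpR_eq_zero A D ω hω hsupp hsub
    have hu0 : 0 ≤ ∫ z in D, u z * φ z := by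
      simpa [EReal.toReal_coe] using hposint ω hω hsupp hsub hωpos
    have hφc : Continuous φ := continuous_alphaOpR A hω
    have hφs : HasCompactSupport φ :=
      HasCompactSupport.intro hsupp fun x hx => alphaOpR_eq_zero_of_nmem A hx
    have hIφ : IntegrableOn φ D volume :=
      (hφc.integrable_of_hasCompactSupport hφs).integrableOn
    have hIuφ : IntegrableOn (fun z => u z * φ z) D volume := by
      set K := tsupport ω with hK
      have hKc : IsCompact K := hsupp
      have huK : IntegrableOn u K volume :=
        hloc'.integrableOn_compact_subset hsub hKc
      have hbd : ∃ C, ∀ x, ‖φ x‖ ≤ C := hφs.exists_bound_of_continuous hφc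
      have h2 : Integrable (fun z => φ z * u z) (volume.restrict K) :=
        huK.bdd_mul (c := hbd.choose) hφc.aestronglyMeasurable (ae_of_all _ hbd.choose_spec)
      have h3 : IntegrableOn (fun z => u z * φ z) K volume := by
        simpa [mul_comm, IntegrableOn] using h2
      have h4 : IntegrableOn (fun z => u z * φ z) (D \ K) volume := by
        refine MeasureTheory.IntegrableOn.congr_fun
          (f := fun _ : Cn n => (0:ℝ)) integrableOn_zero ?_
          (hD.measurableSet.diff (isClosed_tsupport ω).measurableSet)
        intro z hz
        have hφ0 : φ z = 0 := alphaOpR_eq_zero_of_nmem A hz.2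
        simp [hφ0]
      have h5 : IntegrableOn (fun z => u z * φ z) (K ∪ (D \ K)) volume :=
        integrableOn_union.mpr ⟨h3, h4⟩
      apply h5.mono_set
      intro z hz
      by_cases h : z ∈ K
      · exact Or.inl h
      · exact Or.inr ⟨hz, h⟩
    have e : ∀ z : Cn n, (c * u z + d) * φ z = c * (u z * φ z) + d * φ z :=
      fun z => by ring
    calc (0:ℝ) ≤ c * ∫ z in D, u z * φ z := mul_nonneg hc.le hu0
    _ = c * (∫ z in D, u z * φ z) + d * ∫ z in D, φ z := by rw [hA0]; ring
    _ = (∫ z in D, c * (u z * φ z)) + ∫ z in D, d * φ z := by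
        rw [integral_const_mul, integral_const_mul]
    _ = ∫ z in D, (c * (u z * φ z) + d * φ z) := by
        rw [integral_add (hIuφ.const_mul c) (hIφ.const_mul d)]
    _ = ∫ z in D, (c * u z + d) * φ z := by simp only [e]

end TwoConstantsHelpers


/-- **theorem on two constants.** If `u` is `α`-subharmonic on a bounded
`α`-regular domain `D` with `u ≤ r` on `E ⊆ D` and `u < R` on `D`, `R > r`, then
`u(z) ≤ R·(1 + ω*_α(z,E,D)) - r·ω*_α(z,E,D)` for all `z ∈ D`. -/
theorem two_constants_theorem {n : ℕ} (A : AlphaForm n) (D E : Set (Cn n))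
    (hD : IsAlphaRegularDomain A D) (hE : E ⊆ D)
    (u : Cn n → ℝ) (hu : IsAlphaSubharmonic A D u) (r R : ℝ) (hrR : r < R)
    (hr : ∀ z ∈ E, u z ≤ r) (hR : ∀ z ∈ D, u z < R) :
    ∀ z ∈ D, u z ≤ R * (1 + omega0Star A E D z) - r * omega0Star A E D z := by
  intro z hz
  obtain ⟨hDo, _, _, _⟩ := hD
  have hRr : (0:ℝ) < R - r := sub_pos.mpr hrR
  set c : ℝ := (R - r)⁻¹ with hcdef
  set d : ℝ := -(R * (R - r)⁻¹) with hddef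
  have hc : 0 < c := inv_pos.mpr hRr
  have hkey : (R - r) * c = 1 := mul_inv_cancel₀ (ne_of_gt hRr)
  set v : Cn n → ℝ := fun w => c * u w + d with hvdef
  have hvsub : IsAlphaSubharmonic A D v := isAlphaSubharmonic_affine A hDo hu hc
  have hvE : ∀ w ∈ E, v w ≤ (-1 : ℝ) := by
    intro w hw
    have h1 : c * u w ≤ c * r := mul_le_mul_of_nonneg_left (hr w hw) hc.le
    simp only [hvdef, hddef]
    nlinarith
  have hvD : ∀ w ∈ D, v w < 0 := by
    intro w hw
    have h1 : c * u w < c * R := (mul_lt_mul_iff_right₀ hc).mpr (hR w hw)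
    simp only [hvdef, hddef]
    nlinarith
  have hmem : v ∈ Uclass A E D (fun _ => (-1 : ℝ)) := ⟨hvsub, hvE, hvD⟩
  have hbdd : BddAbove ((fun u' : Cn n → ℝ => u' z) '' Uclass A E D (fun _ => (-1 : ℝ))) := by
    refine ⟨0, ?_⟩
    rintro y ⟨u', hu', rfl⟩
    exact (hu'.2.2 z hz).le
  have h1 : v z ≤ omega0 A E D z := le_csSup hbdd ⟨v, hmem, rfl⟩
  have h2 : omega0 A E D z ≤ omega0Star A E D z := by
    have hev : ∀ᶠ w in 𝓝 z, omegaW A E D (fun _ => (-1 : ℝ)) w ≤ 0 := by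
      filter_upwards [hDo.mem_nhds hz] with w hw
      apply Real.sSup_nonpos
      rintro y ⟨u', hu', rfl⟩
      exact (hu'.2.2 w hw).le
    have hev0 : ∀ᶠ w in (pure z : Filter (Cn n)),
        omegaW A E D (fun _ => (-1 : ℝ)) z ≤ omegaW A E D (fun _ => (-1 : ℝ)) w :=
      Filter.eventually_pure.mpr le_rfl
    have hfreq : ∃ᶠ w in 𝓝 z,
        omegaW A E D (fun _ => (-1 : ℝ)) z ≤ omegaW A E D (fun _ => (-1 : ℝ)) w :=
      hev0.frequently.filter_mono (pure_le_nhds z)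
    exact Filter.le_limsup_of_frequently_le hfreq ⟨0, Filter.eventually_map.mpr hev⟩
  have h3 : v z ≤ omega0Star A E D z := h1.trans h2
  have h4 : c * u z + d ≤ omega0Star A E D z := h3
  have hne0 : R - r ≠ 0 := ne_of_gt hRr
  have h5 : (R - r) * (c * u z + d) ≤ (R - r) * omega0Star A E D z :=
    mul_le_mul_of_nonneg_left h4 hRr.le
  have hexp : (R - r) * (c * u z + d) = u z - R := by
    simp only [hcdef, hddef]
    field_simp
    ring
  have hsplit : (R - r) * omega0Star A E D z
      = R * omega0Star A E D z - r * omega0Star A E D z := by ring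
  linarith [h5, hexp, hsplit]
end

section
/- (Weighted theorem on two constants) Let D ⊂ ℂⁿ be a bounded α-regular domain, E ⊂ D, and ψ a bounded function on E with sup_E ψ < 0. Let u be α-subharmonic on D with u < M on D and u ≤ m on E, where m < M. Then for all z ∈ D, u(z) ≤ M·(1 − ω*_α(z,E,D,ψ)/inf_{w∈E} ψ(w)) + m·ω*_α(z,E,D,ψ)/inf_{w∈E} ψ(w). -/
open MeasureTheory Filter Topology Complex Metric

/-! ### Auxiliary lemmas -/

noncomputable section AuxLemmas

namespace TwoConstAux

variable {n : ℕ}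

lemma contDiff_wdz {f : Cn n → ℂ} (hf : ContDiff ℝ (⊤ : ℕ∞) f) (j : Fin n) :
    ContDiff ℝ (⊤ : ℕ∞) (wdz j f) := by
  have h1 : ContDiff ℝ (⊤ : ℕ∞) (fderiv ℝ f) := hf.fderiv_right (by simp)
  have h2 : ∀ v : Cn n, ContDiff ℝ (⊤ : ℕ∞) (fun z => fderiv ℝ f z v) :=
    fun v => h1.clm_apply contDiff_const
  exact (((h2 _).sub (contDiff_const.mul (h2 _)))).div_const 2

lemma contDiff_wdzbar {f : Cn n → ℂ} (hf : ContDiff ℝ (⊤ : ℕ∞) f) (j : Fin n) :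
    ContDiff ℝ (⊤ : ℕ∞) (wdzbar j f) := by
  have h1 : ContDiff ℝ (⊤ : ℕ∞) (fderiv ℝ f) := hf.fderiv_right (by simp)
  have h2 : ∀ v : Cn n, ContDiff ℝ (⊤ : ℕ∞) (fun z => fderiv ℝ f z v) :=
    fun v => h1.clm_apply contDiff_const
  exact (((h2 _).add (contDiff_const.mul (h2 _)))).div_const 2

lemma wdz_eventually_zero {f : Cn n → ℂ} {z : Cn n} (h : f =ᶠ[𝓝 z] 0) (j : Fin n) :
    wdz j f z = 0 := by
  have : fderiv ℝ f z = 0 := h.fderiv_eq.trans (fderiv_const_apply 0)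
  simp [wdz, this]

lemma wdzbar_eventually_zero {f : Cn n → ℂ} {z : Cn n} (h : f =ᶠ[𝓝 z] 0) (j : Fin n) :
    wdzbar j f z = 0 := by
  have : fderiv ℝ f z = 0 := h.fderiv_eq.trans (fderiv_const_apply 0)
  simp [wdzbar, this]

lemma wdz_support {f : Cn n → ℂ} {z : Cn n} (h : z ∉ tsupport f) (j : Fin n) :
    wdz j f z = 0 := by
  refine wdz_eventually_zero ?_ j
  have : (tsupport f)ᶜ ∈ 𝓝 z := (isClosed_tsupport f).isOpen_compl.mem_nhds h
  filter_upwards [this] with w hw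
  exact image_eq_zero_of_notMem_tsupport hw

lemma wdzbar_support {f : Cn n → ℂ} {z : Cn n} (h : z ∉ tsupport f) (j : Fin n) :
    wdzbar j f z = 0 := by
  refine wdzbar_eventually_zero ?_ j
  have : (tsupport f)ᶜ ∈ 𝓝 z := (isClosed_tsupport f).isOpen_compl.mem_nhds h
  filter_upwards [this] with w hw
  exact image_eq_zero_of_notMem_tsupport hw

lemma tsupport_wdz_subset {f : Cn n → ℂ} (j : Fin n) :
    tsupport (wdz j f) ⊆ tsupport f := by
  apply closure_minimal _ (isClosed_tsupport f)
  intro z hz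
  by_contra h
  exact hz (wdz_support h j)

lemma tsupport_wdzbar_subset {f : Cn n → ℂ} (j : Fin n) :
    tsupport (wdzbar j f) ⊆ tsupport f := by
  apply closure_minimal _ (isClosed_tsupport f)
  intro z hz
  by_contra h
  exact hz (wdzbar_support h j)

lemma differentiableAt_fderiv_apply {f : Cn n → ℂ} (hf : ContDiff ℝ (⊤ : ℕ∞) f) (z v : Cn n) :
    DifferentiableAt ℝ (fun y => fderiv ℝ f y v) z := by
  have hdf : DifferentiableAt ℝ (fderiv ℝ f) z :=
    ((hf.fderiv_right (m := 1) (WithTop.coe_le_coe.mpr le_top)).differentiable one_ne_zero) z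
  exact hdf.clm_apply (differentiableAt_const v)

lemma fderiv_fderiv_apply {f : Cn n → ℂ} (hf : ContDiff ℝ (⊤ : ℕ∞) f) (z w v : Cn n) :
    fderiv ℝ (fun y => fderiv ℝ f y v) z w = fderiv ℝ (fderiv ℝ f) z w v := by
  have hdf : DifferentiableAt ℝ (fderiv ℝ f) z :=
    ((hf.fderiv_right (m := 1) (WithTop.coe_le_coe.mpr le_top)).differentiable one_ne_zero) z
  rw [fderiv_clm_apply hdf (differentiableAt_const v)]
  simp

lemma fderiv_wdz_apply {f : Cn n → ℂ} (hf : ContDiff ℝ (⊤ : ℕ∞) f) (j : Fin n) (z w : Cn n) :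
    fderiv ℝ (wdz j f) z w =
      (fderiv ℝ (fderiv ℝ f) z w (Pi.single j 1)
        - Complex.I * fderiv ℝ (fderiv ℝ f) z w (Pi.single j Complex.I)) / 2 := by
  have h1 := differentiableAt_fderiv_apply hf z (Pi.single j 1)
  have h2 := differentiableAt_fderiv_apply hf z (Pi.single j Complex.I)
  have e1 : wdz j f = fun y => (2:ℂ)⁻¹ * ((fun y => fderiv ℝ f y (Pi.single j 1)) y
      - Complex.I * (fun y => fderiv ℝ f y (Pi.single j Complex.I)) y) := by
    funext y; simp only [wdz]; ring
  rw [e1, fderiv_const_mul (a := fun y => fderiv ℝ f y (Pi.single j 1)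
      - Complex.I * fderiv ℝ f y (Pi.single j Complex.I)) ((h1.sub (h2.const_mul Complex.I))),
    fderiv_fun_sub h1 (h2.const_mul Complex.I), fderiv_const_mul h2 Complex.I]
  simp only [ContinuousLinearMap.smul_apply, ContinuousLinearMap.sub_apply, smul_eq_mul,
    fderiv_fderiv_apply hf]
  ring

lemma fderiv_wdzbar_apply {f : Cn n → ℂ} (hf : ContDiff ℝ (⊤ : ℕ∞) f) (j : Fin n) (z w : Cn n) :
    fderiv ℝ (wdzbar j f) z w =
      (fderiv ℝ (fderiv ℝ f) z w (Pi.single j 1)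
        + Complex.I * fderiv ℝ (fderiv ℝ f) z w (Pi.single j Complex.I)) / 2 := by
  have h1 := differentiableAt_fderiv_apply hf z (Pi.single j 1)
  have h2 := differentiableAt_fderiv_apply hf z (Pi.single j Complex.I)
  have e1 : wdzbar j f = fun y => (2:ℂ)⁻¹ * ((fun y => fderiv ℝ f y (Pi.single j 1)) y
      + Complex.I * (fun y => fderiv ℝ f y (Pi.single j Complex.I)) y) := by
    funext y; simp only [wdzbar]; ring
  rw [e1, fderiv_const_mul (a := fun y => fderiv ℝ f y (Pi.single j 1)
      + Complex.I * fderiv ℝ f y (Pi.single j Complex.I)) ((h1.add (h2.const_mul Complex.I))),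
    fderiv_fun_add h1 (h2.const_mul Complex.I), fderiv_const_mul h2 Complex.I]
  simp only [ContinuousLinearMap.smul_apply, ContinuousLinearMap.add_apply, smul_eq_mul,
    fderiv_fderiv_apply hf]
  ring

lemma wdzbar_wdz_comm {f : Cn n → ℂ} (hf : ContDiff ℝ (⊤ : ℕ∞) f) (j k : Fin n) (z : Cn n) :
    wdzbar k (wdz j f) z = wdz j (wdzbar k f) z := by
  have hsymm : ∀ v w, fderiv ℝ (fderiv ℝ f) z v w = fderiv ℝ (fderiv ℝ f) z w v :=
    hf.contDiffAt.isSymmSndFDerivAt (by rw [minSmoothness_of_isRCLikeNormedField]; exact (WithTop.coe_le_coe.mpr le_top : ((2:ℕ∞) : WithTop ℕ∞) ≤ ((⊤:ℕ∞) : WithTop ℕ∞)))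
  simp only [wdzbar, wdz, fderiv_wdz_apply hf, fderiv_wdzbar_apply hf]
  rw [hsymm (Pi.single j 1) (Pi.single k 1), hsymm (Pi.single j 1) (Pi.single k Complex.I),
    hsymm (Pi.single j Complex.I) (Pi.single k 1),
    hsymm (Pi.single j Complex.I) (Pi.single k Complex.I)]
  ring

lemma continuous_fderiv_apply_of_contDiffOne {f : Cn n → ℂ} (hf : ContDiff ℝ 1 f) (v : Cn n) :
    Continuous fun z => fderiv ℝ f z v := by
  have : ContDiff ℝ 0 (fderiv ℝ f) := hf.fderiv_right (by norm_num)
  exact (this.clm_apply (contDiff_const (c := v))).continuous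

lemma continuous_wdz_of_contDiffOne {f : Cn n → ℂ} (hf : ContDiff ℝ 1 f) (j : Fin n) :
    Continuous (wdz j f) := by
  unfold wdz
  exact (((continuous_fderiv_apply_of_contDiffOne hf _).sub
    (continuous_const.mul (continuous_fderiv_apply_of_contDiffOne hf _))).div_const 2)

lemma integral_mul_wdz_eq {f G : Cn n → ℂ} (hf : ContDiff ℝ 1 f) (hG : ContDiff ℝ (⊤ : ℕ∞) G)
    (hGcs : HasCompactSupport G) (j : Fin n) :
    ∫ z, f z * wdz j G z = - ∫ z, wdz j f z * G z := by
  have hfd : Differentiable ℝ f := hf.differentiable one_ne_zero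
  have hGd : Differentiable ℝ G := hG.differentiable (by simp)
  have hfc : Continuous f := hf.continuous
  have hGc : Continuous G := hG.continuous
  have hDf : ∀ v : Cn n, Continuous fun z => fderiv ℝ f z v :=
    continuous_fderiv_apply_of_contDiffOne hf
  have hDG : ∀ v : Cn n, Continuous fun z => fderiv ℝ G z v :=
    fun v => continuous_fderiv_apply_of_contDiffOne (hG.of_le (by simp)) v
  have hDGcs : ∀ v : Cn n, HasCompactSupport fun z => fderiv ℝ G z v := by
    intro v
    have h1 : HasCompactSupport (fderiv ℝ G) := hGcs.fderiv ℝ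
    exact h1.comp_left (g := fun L : Cn n →L[ℝ] ℂ => L v) rfl
  have int1 : ∀ v : Cn n, Integrable (fun z => f z * fderiv ℝ G z v) volume := by
    intro v
    apply Continuous.integrable_of_hasCompactSupport (hfc.mul (hDG v))
    exact ((hDGcs v).mul_left)
  have int2 : ∀ v : Cn n, Integrable (fun z => fderiv ℝ f z v * G z) volume := by
    intro v
    apply Continuous.integrable_of_hasCompactSupport ((hDf v).mul hGc)
    exact (hGcs.mul_left)
  have int3 : Integrable (fun z => f z * G z) volume := by
    apply Continuous.integrable_of_hasCompactSupport (hfc.mul hGc)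
    exact hGcs.mul_left
  have key : ∀ v : Cn n, ∫ z, f z * fderiv ℝ G z v = - ∫ z, fderiv ℝ f z v * G z := by
    intro v
    exact integral_mul_fderiv_eq_neg_fderiv_mul_of_integrable (int2 v) (int1 v) int3 (fun x _ => hfd x) (fun x _ => hGd x)
  have L : ∫ z, f z * wdz j G z
      = (2:ℂ)⁻¹ * (∫ z, f z * fderiv ℝ G z (Pi.single j 1))
        - ((2:ℂ)⁻¹ * Complex.I) * ∫ z, f z * fderiv ℝ G z (Pi.single j Complex.I) := by
    have e : (fun z => f z * wdz j G z)
        = fun z => (2:ℂ)⁻¹ • (f z * fderiv ℝ G z (Pi.single j 1))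
          - ((2:ℂ)⁻¹ * Complex.I) • (f z * fderiv ℝ G z (Pi.single j Complex.I)) := by
      funext z; simp only [wdz, smul_eq_mul]; ring
    simp only [smul_eq_mul] at e
    rw [e, integral_sub ((int1 _).const_mul _) ((int1 _).const_mul _), integral_const_mul,
      integral_const_mul]
  have R : ∫ z, wdz j f z * G z
      = (2:ℂ)⁻¹ * (∫ z, fderiv ℝ f z (Pi.single j 1) * G z)
        - ((2:ℂ)⁻¹ * Complex.I) * ∫ z, fderiv ℝ f z (Pi.single j Complex.I) * G z := by
    have e : (fun z => wdz j f z * G z)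
        = fun z => (2:ℂ)⁻¹ • (fderiv ℝ f z (Pi.single j 1) * G z)
          - ((2:ℂ)⁻¹ * Complex.I) • (fderiv ℝ f z (Pi.single j Complex.I) * G z) := by
      funext z; simp only [wdz, smul_eq_mul]; ring
    simp only [smul_eq_mul] at e
    rw [e, integral_sub ((int2 _).const_mul _) ((int2 _).const_mul _), integral_const_mul,
      integral_const_mul]
  rw [L, R, key _, key _]
  ring

end TwoConstAux

end AuxLemmas
section S4
open TwoConstAux
namespace TwoConstAux
variable {n : ℕ}

lemma cs_of_subset {f g : Cn n → ℂ} (hf : HasCompactSupport f) (h : tsupport g ⊆ tsupport f) :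
    HasCompactSupport g :=
  IsCompact.of_isClosed_subset hf (isClosed_tsupport _) h

lemma integral_alphaOp_eq_zero (A : AlphaForm n) {f : Cn n → ℂ} (hf : ContDiff ℝ (⊤ : ℕ∞) f)
    (hfc : HasCompactSupport f) : ∫ z, alphaOp A f z = 0 := by
  have hwb : ∀ k, ContDiff ℝ (⊤ : ℕ∞) (wdzbar k f) := contDiff_wdzbar hf
  have hGcs : ∀ k : Fin n, HasCompactSupport (wdzbar k f) := fun k =>
    cs_of_subset hfc (tsupport_wdzbar_subset k)
  have cont2 : ∀ j k : Fin n, Continuous (wdzbar k (wdz j f)) := fun j k =>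
    (contDiff_wdzbar (contDiff_wdz hf j) k).continuous
  have cs2 : ∀ j k : Fin n, HasCompactSupport (wdzbar k (wdz j f)) := fun j k =>
    cs_of_subset (cs_of_subset hfc (tsupport_wdz_subset j)) (tsupport_wdzbar_subset k)
  have intterm : ∀ j k : Fin n,
      Integrable (fun z => A.coeff j k z * wdzbar k (wdz j f) z) volume := fun j k =>
    ((A.contDiff j k).continuous.mul (cont2 j k)).integrable_of_hasCompactSupport
      ((cs2 j k).mul_left)
  have step : ∀ j k : Fin n, ∫ z, A.coeff j k z * wdzbar k (wdz j f) z
      = - ∫ z, wdz j (A.coeff j k) z * wdzbar k f z := by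
    intro j k
    have e : (fun z => A.coeff j k z * wdzbar k (wdz j f) z)
        = fun z => A.coeff j k z * wdz j (wdzbar k f) z :=
      funext fun z => by rw [wdzbar_wdz_comm hf j k z]
    rw [e]
    exact integral_mul_wdz_eq (A.contDiff j k) (hwb k) (hGcs k) j
  have intterm2 : ∀ j k : Fin n,
      Integrable (fun z => wdz j (A.coeff j k) z * wdzbar k f z) volume := fun j k =>
    ((continuous_wdz_of_contDiffOne (A.contDiff j k) j).mul
      (hwb k).continuous).integrable_of_hasCompactSupport ((hGcs k).mul_left)
  unfold alphaOp
  rw [integral_finset_sum _ (fun j _ => integrable_finset_sum _ (fun k _ => intterm j k))]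
  have e2 : ∀ j : Fin n, ∫ z, ∑ k, A.coeff j k z * wdzbar k (wdz j f) z
      = ∑ k, ∫ z, A.coeff j k z * wdzbar k (wdz j f) z :=
    fun j => integral_finset_sum _ (fun k _ => intterm j k)
  simp only [e2, step]
  rw [Finset.sum_comm]
  apply Finset.sum_eq_zero
  intro k _
  rw [Finset.sum_neg_distrib, ← integral_finset_sum _ (fun j _ => intterm2 j k)]
  have e3 : (fun z => ∑ j, wdz j (A.coeff j k) z * wdzbar k f z) = fun _ => (0:ℂ) :=
    funext fun z => by rw [← Finset.sum_mul, A.closed k z, zero_mul]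
  rw [e3, integral_zero, neg_zero]

lemma coe_contDiff {ω : Cn n → ℝ} (hω : ContDiff ℝ (⊤ : ℕ∞) ω) :
    ContDiff ℝ (⊤ : ℕ∞) (fun w => (ω w : ℂ)) :=
  Complex.ofRealCLM.contDiff.comp hω

lemma coe_hasCompactSupport {ω : Cn n → ℝ} (hωc : HasCompactSupport ω) :
    HasCompactSupport (fun w => (ω w : ℂ)) :=
  hωc.comp_left (g := fun x : ℝ => (x : ℂ)) (by simp)

lemma tsupport_coe_subset {ω : Cn n → ℝ} :
    tsupport (fun w => (ω w : ℂ)) ⊆ tsupport ω := by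
  apply closure_mono
  intro z hz
  simp only [Function.mem_support] at hz ⊢
  exact fun h => hz (by simp [h])

lemma alphaOpR_eq_zero_of_nmem (A : AlphaForm n) {ω : Cn n → ℝ} {z : Cn n}
    (h : z ∉ tsupport ω) : alphaOpR A ω z = 0 := by
  unfold alphaOpR alphaOp
  have hz : ∀ j k : Fin n, wdzbar k (wdz j (fun w => (ω w : ℂ))) z = 0 := by
    intro j k
    apply wdzbar_support
    intro hmem
    exact h (tsupport_coe_subset (tsupport_wdz_subset j hmem))
  simp [hz]

lemma integrable_alphaOp (A : AlphaForm n) {f : Cn n → ℂ} (hf : ContDiff ℝ (⊤ : ℕ∞) f)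
    (hfc : HasCompactSupport f) : Integrable (alphaOp A f) volume := by
  unfold alphaOp
  apply integrable_finset_sum
  intro j _
  apply integrable_finset_sum
  intro k _
  exact ((A.contDiff j k).continuous.mul
      (contDiff_wdzbar (contDiff_wdz hf j) k).continuous).integrable_of_hasCompactSupport
    ((cs_of_subset (cs_of_subset hfc (tsupport_wdz_subset j))
      (tsupport_wdzbar_subset k)).mul_left)

lemma continuous_alphaOpR (A : AlphaForm n) {ω : Cn n → ℝ} (hω : ContDiff ℝ (⊤ : ℕ∞) ω) :
    Continuous (alphaOpR A ω) := by
  unfold alphaOpR alphaOp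
  apply Complex.continuous_re.comp
  apply continuous_finset_sum
  intro j _
  apply continuous_finset_sum
  intro k _
  exact (A.contDiff j k).continuous.mul
    (contDiff_wdzbar (contDiff_wdz (coe_contDiff hω) j) k).continuous

lemma setIntegral_alphaOpR_eq_zero (A : AlphaForm n) {D : Set (Cn n)} {ω : Cn n → ℝ}
    (hω : ContDiff ℝ (⊤ : ℕ∞) ω) (hωc : HasCompactSupport ω) (hsupp : tsupport ω ⊆ D) :
    ∫ z in D, alphaOpR A ω z = 0 := by
  rw [setIntegral_eq_integral_of_forall_compl_eq_zero
    (fun z hz => alphaOpR_eq_zero_of_nmem A (fun h => hz (hsupp h)))]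
  have hint := integrable_alphaOp A (coe_contDiff hω) (coe_hasCompactSupport hωc)
  have : ∫ z, alphaOpR A ω z = Complex.reCLM (∫ z, alphaOp A (fun w => (ω w : ℂ)) z) := by
    rw [← ContinuousLinearMap.integral_comp_comm Complex.reCLM hint]
    rfl
  rw [this, integral_alphaOp_eq_zero A (coe_contDiff hω) (coe_hasCompactSupport hωc)]
  simp

end TwoConstAux
end S4
section S5
namespace TwoConstAux
variable {n : ℕ}

lemma limsup_coe_affine {α : Type*} {l : Filter α} {g : α → ℝ} {c a b : ℝ} (ha : 0 < a)
    (h : Filter.limsup (fun z => ((g z : ℝ) : EReal)) l = ((c : ℝ) : EReal)) :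
    Filter.limsup (fun z => ((a * g z + b : ℝ) : EReal)) l = ((a * c + b : ℝ) : EReal) := by
  apply le_antisymm
  · by_contra hlt
    push_neg at hlt
    obtain ⟨r, hr1, hr2⟩ := EReal.lt_iff_exists_real_btwn.mp hlt
    have hcr : c < (r - b) / a := by
      rw [EReal.coe_lt_coe_iff] at hr1
      rw [lt_div_iff₀ ha]; linarith
    have hlt' : Filter.limsup (fun z => ((g z : ℝ) : EReal)) l < (((r - b) / a : ℝ) : EReal) := by
      rw [h]; exact_mod_cast hcr
    have hev := Filter.eventually_lt_of_limsup_lt hlt'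
    have hev2 : ∀ᶠ z in l, ((a * g z + b : ℝ) : EReal) ≤ ((r : ℝ) : EReal) := by
      filter_upwards [hev] with z hzv
      rw [EReal.coe_lt_coe_iff] at hzv
      rw [EReal.coe_le_coe_iff]
      rw [lt_div_iff₀ ha] at hzv; linarith
    exact absurd (Filter.limsup_le_of_le (by isBoundedDefault) hev2) (not_le.mpr hr2)
  · by_contra hlt
    push_neg at hlt
    obtain ⟨r, hr1, hr2⟩ := EReal.lt_iff_exists_real_btwn.mp hlt
    have hcr : (r - b) / a < c := by
      rw [EReal.coe_lt_coe_iff] at hr2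
      rw [div_lt_iff₀ ha]; linarith
    have hlt' : (((r - b) / a : ℝ) : EReal) < Filter.limsup (fun z => ((g z : ℝ) : EReal)) l := by
      rw [h]; exact_mod_cast hcr
    have hfreq := Filter.frequently_lt_of_lt_limsup (by isBoundedDefault) hlt'
    have hfreq2 : ∃ᶠ z in l, ((r : ℝ) : EReal) ≤ ((a * g z + b : ℝ) : EReal) := by
      apply hfreq.mono
      intro z hzv
      rw [EReal.coe_lt_coe_iff] at hzv
      rw [EReal.coe_le_coe_iff]
      rw [div_lt_iff₀ ha] at hzv; linarith
    exact absurd (Filter.le_limsup_of_frequently_le hfreq2) (not_le.mpr hr1)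

lemma usc_coe_affine {g : Cn n → ℝ} {D : Set (Cn n)} {a b : ℝ} (ha : 0 < a)
    (h : UpperSemicontinuousOn (fun z => ((g z : ℝ) : EReal)) D) :
    UpperSemicontinuousOn (fun z => ((a * g z + b : ℝ) : EReal)) D := by
  intro x hx y hy
  induction y using EReal.rec with
  | bot => exact absurd hy (by simp)
  | top => exact Filter.Eventually.of_forall (fun _ => EReal.coe_lt_top _)
  | coe r =>
    rw [EReal.coe_lt_coe_iff] at hy
    have hgx : g x < (r - b) / a := by rw [lt_div_iff₀ ha]; linarith
    have := h x hx (((r - b) / a : ℝ) : EReal) (EReal.coe_lt_coe_iff.mpr hgx)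
    filter_upwards [this] with z hzv
    rw [EReal.coe_lt_coe_iff] at hzv ⊢
    rw [lt_div_iff₀ ha] at hzv; linarith

lemma hasCompactSupport_alphaOpR (A : AlphaForm n) {ω : Cn n → ℝ}
    (hωc : HasCompactSupport ω) : HasCompactSupport (alphaOpR A ω) := by
  apply IsCompact.of_isClosed_subset hωc (isClosed_tsupport _)
  apply closure_minimal _ (isClosed_tsupport ω)
  intro z hz
  by_contra h
  exact hz (alphaOpR_eq_zero_of_nmem A h)

lemma isAlphaSubharmonic_affine {A : AlphaForm n} {D : Set (Cn n)} {u : Cn n → ℝ}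
    (hu : IsAlphaSubharmonic A D u) {a : ℝ} (b : ℝ) (ha : 0 < a) :
    IsAlphaSubharmonic A D (fun z => a * u z + b) := by
  obtain ⟨h1, h2, h3, h4, h5⟩ := hu
  have hloc : LocallyIntegrableOn u D volume := by
    have := h4
    simpa using this
  refine ⟨fun z _ => EReal.coe_ne_top _, usc_coe_affine ha h2, ?_, ?_, ?_⟩
  · intro z₀ hz₀ S hS
    exact limsup_coe_affine ha (h3 z₀ hz₀ S hS)
  · have hl1 : LocallyIntegrableOn (fun z => a * u z) D volume := by
      intro x hx
      obtain ⟨s, hs, hint⟩ := hloc x hx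
      exact ⟨s, hs, hint.const_mul a⟩
    have hl2 : LocallyIntegrableOn (fun _ : Cn n => b) D volume :=
      (locallyIntegrable_const b).locallyIntegrableOn D
    have := hl1.add hl2
    show LocallyIntegrableOn (fun z => (((a * u z + b : ℝ)) : EReal).toReal) D volume
    simp only [EReal.toReal_coe]
    exact this
  · intro ω hω hωc hsupp hpos
    have h5' : 0 ≤ ∫ z in D, u z * alphaOpR A ω z := by
      have := h5 ω hω hωc hsupp hpos
      simpa using this
    have hg0 : ∫ z in D, alphaOpR A ω z = 0 := setIntegral_alphaOpR_eq_zero A hω hωc hsupp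
    set g := alphaOpR A ω with hg
    have hgcont : Continuous g := continuous_alphaOpR A hω
    have hgcs : HasCompactSupport g := hasCompactSupport_alphaOpR A hωc
    have hgint : IntegrableOn g D volume :=
      (hgcont.integrable_of_hasCompactSupport hgcs).integrableOn
    have hK : IsCompact (tsupport ω) := hωc
    have huK : IntegrableOn u (tsupport ω) volume :=
      hloc.integrableOn_compact_subset hsupp hK
    have hbnd : ∃ C, ∀ x, ‖g x‖ ≤ C := by
      obtain ⟨x₀, hx₀⟩ := hgcont.norm.exists_forall_ge_of_hasCompactSupport hgcs.norm
      exact ⟨‖g x₀‖, hx₀⟩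
    have hugK : IntegrableOn (fun z => u z * g z) (tsupport ω) volume := by
      have := huK.bdd_mul (hgcont.aestronglyMeasurable.restrict) (ae_of_all _ hbnd.choose_spec)
      simpa [mul_comm, IntegrableOn] using this
    have hsupp2 : Function.support (fun z => u z * g z) ⊆ tsupport ω := by
      intro z hz
      by_contra h
      apply hz
      have : g z = 0 := alphaOpR_eq_zero_of_nmem A h
      simp [this]
    have hugD : IntegrableOn (fun z => u z * g z) D volume :=
      ((integrableOn_iff_integrable_of_support_subset hsupp2).mp hugK).integrableOn
    have he : (fun z => ((((a * u z + b : ℝ)) : EReal)).toReal * g z)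
        = fun z => a * (u z * g z) + b * g z := by
      funext z; rw [EReal.toReal_coe]; ring
    rw [he, integral_add (hugD.const_mul a) (hgint.const_mul b), integral_const_mul,
      integral_const_mul, hg0]
    have := mul_nonneg ha.le h5'
    linarith

end TwoConstAux
end S5

/-- **weighted theorem on two constants.** If `u` is `α`-subharmonic on a
bounded `α`-regular domain `D` with `u < M` on `D` and `u ≤ m` on `E ⊆ D`, `m < M`, then
`u(z) ≤ M·(1 - ω*_α(z,E,D,ψ)/inf_E ψ) + m·ω*_α(z,E,D,ψ)/inf_E ψ` for all `z ∈ D`. -/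
theorem weighted_two_constants {n : ℕ} (A : AlphaForm n) (D E : Set (Cn n))
    (hD : IsAlphaRegularDomain A D) (hE : E ⊆ D) (ψ : Cn n → ℝ)
    (hbd : ∃ C : ℝ, ∀ z ∈ E, |ψ z| ≤ C) (hsup : ∃ c < (0 : ℝ), ∀ z ∈ E, ψ z ≤ c)
    (u : Cn n → ℝ) (hu : IsAlphaSubharmonic A D u) (m M : ℝ) (hmM : m < M)
    (hM : ∀ z ∈ D, u z < M) (hm : ∀ z ∈ E, u z ≤ m) :
    ∀ z ∈ D, u z ≤
      M * (1 - omegaWStar A E D ψ z / sInf (ψ '' E))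
        + m * (omegaWStar A E D ψ z / sInf (ψ '' E)) := by
  intro z hz
  obtain ⟨C, hC⟩ := hbd
  obtain ⟨c, hc0, hc⟩ := hsup
  have hDopen : IsOpen D := hD.1
  by_cases hEe : E = ∅
  · subst hEe
    simp only [Set.image_empty, Real.sInf_empty, div_zero, mul_zero, sub_zero, mul_one, add_zero]
    exact (hM z hz).le
  have hEne : E.Nonempty := Set.nonempty_iff_ne_empty.mpr hEe
  set I := sInf (ψ '' E) with hI
  have hbb : BddBelow (ψ '' E) := by
    refine ⟨-C, ?_⟩
    rintro y ⟨w, hw, rfl⟩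
    linarith [(abs_le.mp (hC w hw)).1]
  have hI_le : ∀ w ∈ E, I ≤ ψ w := fun w hw => csInf_le hbb ⟨w, hw, rfl⟩
  have hIneg : I < 0 := by
    obtain ⟨w₀, hw₀⟩ := hEne
    exact lt_of_le_of_lt (le_trans (hI_le w₀ hw₀) (hc w₀ hw₀)) hc0
  set a : ℝ := (-I) / (M - m) with ha
  have ha0 : 0 < a := div_pos (neg_pos.mpr hIneg) (sub_pos.mpr hmM)
  have haMm : a * (M - m) = -I := div_mul_cancel₀ _ (sub_pos.mpr hmM).ne'
  set v : Cn n → ℝ := fun w => a * u w + (-(a * M)) with hv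
  have hv_sub : IsAlphaSubharmonic A D v := TwoConstAux.isAlphaSubharmonic_affine hu _ ha0
  have hv_neg : ∀ w ∈ D, v w < 0 := by
    intro w hw
    have := hM w hw
    have h2 : a * u w < a * M := (mul_lt_mul_iff_right₀ ha0).mpr this
    simp only [hv]; linarith
  have hv_le : ∀ w ∈ E, v w ≤ ψ w := by
    intro w hw
    have h1 : u w ≤ m := hm w hw
    have h2 : a * u w ≤ a * m := (mul_le_mul_iff_right₀ ha0).mpr h1
    have : v w ≤ I := by simp only [hv]; linarith [haMm]
    exact le_trans this (hI_le w hw)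
  have hv_mem : v ∈ Uclass A E D ψ := ⟨hv_sub, hv_le, hv_neg⟩
  have hne : ∀ w : Cn n, ((fun u' : Cn n → ℝ => u' w) '' Uclass A E D ψ).Nonempty :=
    fun w => ⟨v w, v, hv_mem, rfl⟩
  have hba : ∀ w ∈ D, BddAbove ((fun u' : Cn n → ℝ => u' w) '' Uclass A E D ψ) := by
    intro w hw
    refine ⟨0, ?_⟩
    rintro y ⟨u', hu', rfl⟩
    exact (hu'.2.2 w hw).le
  have h_vle : ∀ w ∈ D, v w ≤ omegaW A E D ψ w :=
    fun w hw => le_csSup (hba w hw) ⟨v, hv_mem, rfl⟩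
  have h_om0 : ∀ w ∈ D, omegaW A E D ψ w ≤ 0 := by
    intro w hw
    apply csSup_le (hne w)
    rintro y ⟨u', hu', rfl⟩
    exact (hu'.2.2 w hw).le
  have hlim : Filter.limsup (fun w => ((v w : ℝ) : EReal)) (𝓝 z) = ((v z : ℝ) : EReal) := by
    have := hv_sub.2.2.1 z hz Set.univ ⟨Set.univ, Filter.univ_mem, by simp⟩
    simpa [nhdsWithin_univ] using this
  have hDev : ∀ᶠ w in 𝓝 z, w ∈ D := hDopen.mem_nhds hz
  have hbound : Filter.IsBoundedUnder (· ≤ ·) (𝓝 z) (omegaW A E D ψ) :=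
    ⟨0, Filter.eventually_map.mpr (hDev.mono fun w hw => h_om0 w hw)⟩
  have hkey : v z ≤ omegaWStar A E D ψ z := by
    rw [omegaWStar]
    by_contra hlt
    push_neg at hlt
    obtain ⟨r, hr1, hr2⟩ := exists_between hlt
    have hfr : ∃ᶠ w in 𝓝 z, ((r : ℝ) : EReal) < ((v w : ℝ) : EReal) := by
      apply Filter.frequently_lt_of_lt_limsup (by isBoundedDefault)
      rw [hlim]
      exact_mod_cast hr2
    have hfr2 : ∃ᶠ w in 𝓝 z, r ≤ omegaW A E D ψ w := by
      apply (hfr.and_eventually hDev).mono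
      rintro w ⟨hw1, hw2⟩
      rw [EReal.coe_lt_coe_iff] at hw1
      exact le_trans hw1.le (h_vle w hw2)
    exact absurd (Filter.le_limsup_of_frequently_le hfr2 hbound) (not_le.mpr hr1)
  -- final arithmetic
  set W := omegaWStar A E D ψ z with hW
  have hWI : (W / I) * I = W := div_mul_cancel₀ _ hIneg.ne
  have h1 : a * u z + (-(a * M)) ≤ W := hkey
  have h2 : a * (u z - M) ≤ (W / I) * I := by rw [hWI]; linarith
  have h3 : (W / I) * I = -(W / I) * (a * (M - m)) := by rw [haMm]; ring
  have h4 : a * (u z - M) ≤ a * (-(W / I) * (M - m)) := by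
    rw [h3] at h2; linarith [h2]
  have h5 : u z - M ≤ -(W / I) * (M - m) := by
    have := (mul_le_mul_iff_right₀ ha0).mp (by linarith [h4] : a * (u z - M) ≤ a * (-(W / I) * (M - m)))
    linarith
  nlinarith [h5]
end

section
/- Let D ⊂ ℂⁿ be a bounded α-regular domain, E ⊂ D an arbitrary set, and ψ a bounded lower semicontinuous function on E with sup_E ψ < 0. Then there exists a decreasing sequence of open sets U_j ⊃ E such that ( lim_{j→∞} ω*_α(z,U_j,D,ψ̃) )* = ω*_α(z,E,D,ψ) for all z ∈ D, where ψ̃ is a lower semicontinuous function on some open neighborhood V of E with ψ̃ = ψ on E and sup_{z∈V} ψ̃(z) < 0, and (·)* denotes upper semicontinuous regularization. -/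
open MeasureTheory Filter Topology Complex Metric

section Helpers

open Filter Set

variable {n : ℕ}

lemma cobdd_nhds (f : Cn n → ℝ) (w : Cn n) :
    Filter.IsCoboundedUnder (· ≤ ·) (𝓝 w) f := by
  refine ⟨f w, fun a ha => ?_⟩
  exact (Filter.eventually_map.1 ha).self_of_nhds

lemma bddu_of_le (f : Cn n → ℝ) (l : Filter (Cn n)) (h : ∀ᶠ z in l, f z ≤ 0) :
    Filter.IsBoundedUnder (· ≤ ·) l f :=
  ⟨0, by simpa [Filter.eventually_map] using h⟩

lemma frequently_self {p : Cn n → Prop} {w : Cn n} (hp : p w) : ∃ᶠ z in 𝓝 w, p z :=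
  Filter.frequently_iff.2 fun hU => ⟨w, mem_of_mem_nhds hU, hp⟩

lemma self_le_limsup {f : Cn n → ℝ} {w : Cn n} (h0 : ∀ z, f z ≤ 0) :
    f w ≤ Filter.limsup f (𝓝 w) :=
  Filter.le_limsup_of_frequently_le (frequently_self le_rfl) (bddu_of_le f _ (.of_forall h0))

lemma limsup_nonpos {f : Cn n → ℝ} {w : Cn n} (h0 : ∀ᶠ z in 𝓝 w, f z ≤ 0) :
    Filter.limsup f (𝓝 w) ≤ 0 :=
  Filter.limsup_le_of_le (cobdd_nhds f w) h0

lemma limsup_mono_fun {f g : Cn n → ℝ} {w : Cn n} (hfg : ∀ᶠ z in 𝓝 w, f z ≤ g z)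
    (hg : ∀ᶠ z in 𝓝 w, g z ≤ 0) :
    Filter.limsup f (𝓝 w) ≤ Filter.limsup g (𝓝 w) :=
  Filter.limsup_le_limsup hfg (cobdd_nhds f w) (bddu_of_le g _ hg)

/-- Upper semicontinuity (idempotence) of the upper regularization. -/
lemma limsup_limsup_le {f : Cn n → ℝ} (h0 : ∀ z, f z ≤ 0) (z : Cn n) :
    Filter.limsup (fun w => Filter.limsup f (𝓝 w)) (𝓝 z) ≤ Filter.limsup f (𝓝 z) := by
  set g : Cn n → ℝ := fun w => Filter.limsup f (𝓝 w) with hg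
  refine le_of_forall_gt_imp_ge_of_dense fun y hy => ?_
  have hev : ∀ᶠ w in 𝓝 z, f w < y :=
    Filter.eventually_lt_of_limsup_lt hy (bddu_of_le f _ (.of_forall h0))
  obtain ⟨O, hO, hOopen, hzO⟩ := _root_.eventually_nhds_iff.1 hev
  refine Filter.limsup_le_of_le (cobdd_nhds g z) ?_
  filter_upwards [hOopen.mem_nhds hzO] with w hw
  exact Filter.limsup_le_of_le (cobdd_nhds f w)
    (Filter.eventually_iff_exists_mem.2 ⟨O, hOopen.mem_nhds hw, fun v hv => (hO v hv).le⟩)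

end Helpers
section SubhLemmas

open Filter Set MeasureTheory

variable {n : ℕ} {A : AlphaForm n} {D : Set (Cn n)} {u : Cn n → ℝ}

lemma strong_usc_limsup (hu : IsAlphaSubharmonic A D u) {z : Cn n} (hz : z ∈ D) :
    Filter.limsup (fun w => (u w : EReal)) (𝓝 z) = (u z : EReal) := by
  have h := hu.2.2.1 z hz Set.univ ⟨Set.univ, Filter.univ_mem, by simp⟩
  simpa [nhdsWithin_univ] using h

lemma frequently_gt_of_lt (hu : IsAlphaSubharmonic A D u) {z : Cn n} (hz : z ∈ D)
    {b : ℝ} (hb : b < u z) : ∃ᶠ w in 𝓝 z, b < u w := by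
  have h1 := strong_usc_limsup hu hz
  have h2 : (b : EReal) < Filter.limsup (fun w => (u w : EReal)) (𝓝 z) := by
    rw [h1]; exact_mod_cast hb
  have h3 := Filter.frequently_lt_of_lt_limsup (by isBoundedDefault) h2
  exact h3.mono fun w hw => by exact_mod_cast hw

lemma usc_real (hu : IsAlphaSubharmonic A D u) : UpperSemicontinuousOn u D := by
  intro x hx y hy
  have h := hu.2.1 x hx (y : EReal)
    (show ((u x : ℝ) : EReal) < (y : EReal) by exact_mod_cast hy)
  exact h.mono fun w hw => by
    have hw' : ((u w : ℝ) : EReal) < (y : EReal) := hw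
    exact_mod_cast hw'

/-- Scaling an `α`-subharmonic function by a positive constant. -/
lemma smul_subh (hu : IsAlphaSubharmonic A D u) {c : ℝ} (hc : 0 < c) :
    IsAlphaSubharmonic A D (fun z => c * u z) := by
  obtain ⟨hne, husc, hsusc, hloc, hint⟩ := hu
  refine ⟨fun z _ => EReal.coe_ne_top _, ?_, ?_, ?_, ?_⟩
  · -- usc
    intro x hx y hy
    have hy' : ((c * u x : ℝ) : EReal) < y := hy
    induction y using EReal.rec with
    | bot => exact absurd hy' (by simp)
    | top =>
      refine Filter.Eventually.of_forall fun w => ?_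
      exact EReal.coe_lt_top (c * u w)
    | coe r =>
      have hcu : c * u x < r := by exact_mod_cast hy'
      have hr : u x < r / c := by
        rw [lt_div_iff₀ hc, mul_comm]; exact hcu
      have h := husc x hx ((r / c : ℝ) : EReal)
        (show ((u x : ℝ) : EReal) < ((r / c : ℝ) : EReal) by exact_mod_cast hr)
      refine h.mono fun w hw => ?_
      have hw' : u w < r / c := by
        have : ((u w : ℝ) : EReal) < ((r / c : ℝ) : EReal) := hw
        exact_mod_cast this
      have hlt : c * u w < r := by
        rw [mul_comm, ← lt_div_iff₀ hc]; exact hw'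
      show ((c * u w : ℝ) : EReal) < ((r : ℝ) : EReal)
      exact_mod_cast hlt
  · -- strong usc
    intro z hz S hS
    have hbase : Filter.limsup (fun w => (u w : EReal)) (𝓝[S] z) = ((u z : ℝ) : EReal) :=
      hsusc z hz S hS
    set F := 𝓝[S] z with hF
    show Filter.limsup (fun w => ((c * u w : ℝ) : EReal)) F = ((c * u z : ℝ) : EReal)
    set T := Filter.limsup (fun w => ((c * u w : ℝ) : EReal)) F with hT
    have hle : T ≤ ((c * u z : ℝ) : EReal) := by
      by_contra hcon
      push_neg at hcon
      obtain ⟨q, hq1, hq2⟩ := EReal.lt_iff_exists_real_btwn.1 hcon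
      have hq1' : c * u z < q := by exact_mod_cast hq1
      have hb : u z < q / c := by rw [lt_div_iff₀ hc, mul_comm]; exact hq1'
      have hlt : Filter.limsup (fun w => (u w : EReal)) F < ((q / c : ℝ) : EReal) := by
        rw [hbase]; exact_mod_cast hb
      have hev := Filter.eventually_lt_of_limsup_lt hlt (by isBoundedDefault)
      have hev' : ∀ᶠ w in F, ((c * u w : ℝ) : EReal) ≤ ((q : ℝ) : EReal) := by
        refine hev.mono fun w hw => ?_
        have hw' : u w < q / c := by exact_mod_cast hw
        have : c * u w < q := by rw [mul_comm, ← lt_div_iff₀ hc]; exact hw'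
        exact_mod_cast this.le
      exact absurd (Filter.limsup_le_of_le (by isBoundedDefault) hev') (not_le.2 hq2)
    have hge : ((c * u z : ℝ) : EReal) ≤ T := by
      by_contra hcon
      push_neg at hcon
      obtain ⟨q, hq1, hq2⟩ := EReal.lt_iff_exists_real_btwn.1 hcon
      have hq2' : q < c * u z := by exact_mod_cast hq2
      have hb : q / c < u z := by rw [div_lt_iff₀ hc, mul_comm]; exact hq2'
      have hlt : ((q / c : ℝ) : EReal) < Filter.limsup (fun w => (u w : EReal)) F := by
        rw [hbase]; exact_mod_cast hb
      have hfr := Filter.frequently_lt_of_lt_limsup (by isBoundedDefault) hlt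
      have hfr' : ∃ᶠ w in F, ((q : ℝ) : EReal) ≤ ((c * u w : ℝ) : EReal) := by
        refine hfr.mono fun w hw => ?_
        have hw' : q / c < u w := by exact_mod_cast hw
        have : q < c * u w := by rw [mul_comm, ← div_lt_iff₀ hc]; exact hw'
        exact_mod_cast this.le
      exact absurd (Filter.le_limsup_of_frequently_le hfr' (by isBoundedDefault))
        (not_le.2 hq1)
    exact le_antisymm hle hge
  · -- locally integrable
    have heq : (fun z => (((c * u z : ℝ) : EReal)).toReal)
        = fun z => c * (((u z : ℝ) : EReal)).toReal := by
      funext z; rw [EReal.toReal_coe, EReal.toReal_coe]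
    show LocallyIntegrableOn (fun z => (((c * u z : ℝ) : EReal)).toReal) D volume
    rw [heq]
    intro x hx
    obtain ⟨t, ht, hti⟩ := hloc x hx
    exact ⟨t, ht, hti.const_mul c⟩
  · -- integral positivity
    intro ω hω1 hω2 hω3 hω4
    show 0 ≤ ∫ z in D, (((c * u z : ℝ) : EReal)).toReal * alphaOpR A ω z
    have heq : ∀ z : Cn n, (((c * u z : ℝ) : EReal)).toReal * alphaOpR A ω z
        = c * ((((u z : ℝ) : EReal)).toReal * alphaOpR A ω z) := by
      intro z; rw [EReal.toReal_coe, EReal.toReal_coe, mul_assoc]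
    calc (0:ℝ) ≤ c * ∫ z in D, (((u z : ℝ) : EReal)).toReal * alphaOpR A ω z :=
          mul_nonneg hc.le (hint ω hω1 hω2 hω3 hω4)
      _ = ∫ z in D, c * ((((u z : ℝ) : EReal)).toReal * alphaOpR A ω z) :=
          (integral_const_mul c _).symm
      _ = ∫ z in D, (((c * u z : ℝ) : EReal)).toReal * alphaOpR A ω z := by
          simp_rw [heq]

end SubhLemmas
section ModifLemmas
open scoped Classical

open Filter Set MeasureTheory

variable {n : ℕ} {A : AlphaForm n} {D : Set (Cn n)} {u : Cn n → ℝ}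

/-- Modifying an `α`-subharmonic function outside the open set `D` preserves
`α`-subharmonicity. -/
lemma modif_subh (hD : IsOpen D) (hu : IsAlphaSubharmonic A D u) (M : ℝ) :
    IsAlphaSubharmonic A D (fun z => if z ∈ D then u z else M) := by
  obtain ⟨hne, husc, hsusc, hloc, hint⟩ := hu
  refine ⟨fun z _ => EReal.coe_ne_top _, ?_, ?_, ?_, ?_⟩
  · -- usc
    intro x hx y hy
    have hy' : ((u x : ℝ) : EReal) < y := by
      have hxx : (if x ∈ D then u x else M) = u x := if_pos hx
      calc ((u x : ℝ) : EReal) = (((if x ∈ D then u x else M) : ℝ) : EReal) := by rw [hxx]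
        _ < y := hy
    have h := husc x hx y hy'
    have hD' : D ∈ 𝓝[D] x := self_mem_nhdsWithin
    filter_upwards [h, hD'] with w hw hwD
    show (((if w ∈ D then u w else M) : ℝ) : EReal) < y
    rwa [if_pos hwD]
  · -- strong usc
    intro z hz S hS
    have hDS : D ∈ 𝓝[S] z := mem_nhdsWithin_of_mem_nhds (hD.mem_nhds hz)
    have hEq : (fun w => (((if w ∈ D then u w else M) : ℝ) : EReal))
        =ᶠ[𝓝[S] z] (fun w => ((u w : ℝ) : EReal)) := by
      filter_upwards [hDS] with w hw
      rw [if_pos hw]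
    show Filter.limsup (fun w => (((if w ∈ D then u w else M) : ℝ) : EReal)) (𝓝[S] z)
      = (((if z ∈ D then u z else M) : ℝ) : EReal)
    rw [Filter.limsup_congr hEq, if_pos hz]
    exact hsusc z hz S hS
  · -- locally integrable
    intro x hx
    obtain ⟨t, htmem, hti⟩ := hloc x hx
    obtain ⟨O, hOopen, hxO, hsub⟩ := mem_nhdsWithin.1 htmem
    refine ⟨O ∩ D, mem_nhdsWithin.2 ⟨O, hOopen, hxO, subset_rfl⟩, ?_⟩
    have h1 : IntegrableOn (fun z => (((u z : ℝ) : EReal)).toReal) (O ∩ D) volume :=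
      hti.mono_set hsub
    refine h1.congr_fun ?_ (hOopen.measurableSet.inter hD.measurableSet)
    intro w hw
    show (((u w : ℝ) : EReal)).toReal = (((if w ∈ D then u w else M : ℝ) : EReal)).toReal
    rw [if_pos hw.2]
  · -- integral positivity
    intro ω h1 h2 h3 h4
    have heq : ∫ z in D, ((((if z ∈ D then u z else M) : ℝ) : EReal)).toReal * alphaOpR A ω z
        = ∫ z in D, (((u z : ℝ) : EReal)).toReal * alphaOpR A ω z :=
      setIntegral_congr_fun hD.measurableSet (fun w hw => by rw [if_pos hw])
    show 0 ≤ ∫ z in D, ((((if z ∈ D then u z else M) : ℝ) : EReal)).toReal * alphaOpR A ω z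
    rw [heq]
    exact hint ω h1 h2 h3 h4

end ModifLemmas
section OmegaLemmas

open Filter Set MeasureTheory
open scoped Classical

variable {n : ℕ} {A : AlphaForm n} {D S S' : Set (Cn n)} {φ φ' : Cn n → ℝ} {z : Cn n}

lemma uclass_vals_bddAbove (hz : z ∈ D) :
    BddAbove ((fun u : Cn n → ℝ => u z) '' Uclass A S D φ) := by
  refine ⟨0, ?_⟩
  rintro _ ⟨u, hu, rfl⟩
  exact (hu.2.2 z hz).le

lemma le_omegaW {u : Cn n → ℝ} (hu : u ∈ Uclass A S D φ) (hz : z ∈ D) :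
    u z ≤ omegaW A S D φ z :=
  le_csSup (uclass_vals_bddAbove hz) ⟨u, hu, rfl⟩

lemma omegaW_eq_zero_outside (hD : IsOpen D) (hS : S ⊆ D)
    (hne : (Uclass A S D φ).Nonempty) (hz : z ∉ D) : omegaW A S D φ z = 0 := by
  apply Real.sSup_of_not_bddAbove
  rintro ⟨b, hb⟩
  obtain ⟨u, hu⟩ := hne
  have hu' : (fun w => if w ∈ D then u w else b + 1) ∈ Uclass A S D φ := by
    refine ⟨modif_subh hD hu.1 (b + 1), fun w hw => ?_, fun w hw => ?_⟩
    · show (if w ∈ D then u w else b + 1) ≤ φ w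
      rw [if_pos (hS hw)]; exact hu.2.1 w hw
    · show (if w ∈ D then u w else b + 1) < 0
      rw [if_pos hw]; exact hu.2.2 w hw
  have hle : (if z ∈ D then u z else b + 1) ≤ b := hb ⟨_, hu', rfl⟩
  rw [if_neg hz] at hle
  linarith

lemma omegaW_nonpos (hD : IsOpen D) (hS : S ⊆ D) (z : Cn n) : omegaW A S D φ z ≤ 0 := by
  by_cases hcl : (Uclass A S D φ).Nonempty
  · by_cases hz : z ∈ D
    · exact csSup_le (hcl.image _) (by rintro _ ⟨u, hu, rfl⟩; exact (hu.2.2 z hz).le)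
    · rw [omegaW_eq_zero_outside hD hS hcl hz]
  · rw [not_nonempty_iff_eq_empty] at hcl
    show sSup ((fun u : Cn n → ℝ => u z) '' Uclass A S D φ) ≤ 0
    rw [hcl, Set.image_empty, Real.sSup_empty]

lemma omegaWStar_nonpos (hD : IsOpen D) (hS : S ⊆ D) (z : Cn n) :
    omegaWStar A S D φ z ≤ 0 :=
  limsup_nonpos (.of_forall (omegaW_nonpos hD hS))

lemma omegaW_le_star (hD : IsOpen D) (hS : S ⊆ D) (z : Cn n) :
    omegaW A S D φ z ≤ omegaWStar A S D φ z :=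
  self_le_limsup (omegaW_nonpos hD hS)

lemma omegaW_mono (hD : IsOpen D) (hS : S ⊆ D) (hS' : S' ⊆ D)
    (hsub : Uclass A S D φ ⊆ Uclass A S' D φ') (hne : (Uclass A S D φ).Nonempty)
    (z : Cn n) : omegaW A S D φ z ≤ omegaW A S' D φ' z := by
  by_cases hz : z ∈ D
  · exact csSup_le_csSup (uclass_vals_bddAbove hz) (hne.image _)
      (Set.image_mono  hsub)
  · rw [omegaW_eq_zero_outside hD hS hne hz,
      omegaW_eq_zero_outside hD hS' (hne.mono hsub) hz]

lemma omegaWStar_mono (hD : IsOpen D) (hS : S ⊆ D) (hS' : S' ⊆ D)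
    (hsub : Uclass A S D φ ⊆ Uclass A S' D φ') (hne : (Uclass A S D φ).Nonempty)
    (z : Cn n) : omegaWStar A S D φ z ≤ omegaWStar A S' D φ' z :=
  limsup_mono_fun (.of_forall (omegaW_mono hD hS hS' hsub hne))
    (.of_forall (omegaW_nonpos hD hS'))

end OmegaLemmas
section PsiExt

open Filter Set Metric

variable {n : ℕ}

/-- Extension of a bounded lsc function `ψ ≤ c < 0` on `E` to a global lsc function. -/
lemma psi_ext {E : Set (Cn n)} {ψ : Cn n → ℝ} {C c : ℝ}
    (hbd : ∀ z ∈ E, |ψ z| ≤ C) (hc : c < 0) (hsup : ∀ z ∈ E, ψ z ≤ c)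
    (hlsc : LowerSemicontinuousOn ψ E) :
    ∃ ψt : Cn n → ℝ, LowerSemicontinuous ψt ∧ (∀ z ∈ E, ψt z = ψ z) ∧ ∀ z, ψt z ≤ c := by
  set f : Cn n → ℝ → ℝ := fun z r => sInf (ψ '' (E ∩ ball z r)) with hf
  have hbdd : ∀ z r, BddBelow (ψ '' (E ∩ ball z r)) := by
    rintro z r
    refine ⟨-C, ?_⟩
    rintro _ ⟨x, ⟨hxE, _⟩, rfl⟩
    exact neg_le_of_abs_le (hbd x hxE)
  have ha : ∀ z r, f z r ≤ 0 := by
    intro z r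
    rcases eq_or_ne (ψ '' (E ∩ ball z r)) ∅ with he | he
    · simp [hf, he, Real.sInf_empty]
    · obtain ⟨y, hy⟩ := Set.nonempty_iff_ne_empty.2 he
      obtain ⟨x, ⟨hxE, _⟩, rfl⟩ := hy
      exact le_trans (csInf_le_of_le (hbdd z r) ⟨x, ⟨hxE, ‹_›⟩, rfl⟩ (hsup x hxE)) hc.le
  have hK : ∀ z w r r', ball w r' ⊆ ball z r → f z r ≤ f w r' := by
    intro z w r r' hball
    rcases eq_or_ne (ψ '' (E ∩ ball w r')) ∅ with he | he
    · rw [hf]; simp only; rw [he, Real.sInf_empty]; exact ha z r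
    · exact csInf_le_csInf (hbdd z r) (Set.nonempty_iff_ne_empty.2 he)
        (Set.image_mono  (Set.inter_subset_inter_right _ hball))
  set g : Cn n → ℝ := fun z => ⨆ r : {r : ℝ // 0 < r}, f z r.1 with hg
  have hrange : ∀ z, BddAbove (Set.range fun r : {r : ℝ // 0 < r} => f z r.1) := by
    intro z
    exact ⟨0, by rintro _ ⟨r, rfl⟩; exact ha z r.1⟩
  have hg0 : ∀ z, g z ≤ 0 := fun z => ciSup_le fun r => ha z r.1
  have hgE : ∀ z ∈ E, g z = ψ z := by
    intro z hz
    refine le_antisymm (ciSup_le fun r => csInf_le (hbdd z r.1)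
      ⟨z, ⟨hz, mem_ball_self r.2⟩, rfl⟩) ?_
    refine le_of_forall_lt_imp_le_of_dense fun y hy => ?_
    obtain ⟨t, htmem, hO⟩ := Filter.eventually_iff_exists_mem.1 (hlsc z hz y hy)
    obtain ⟨O, hOopen, hzO, hsubO⟩ := mem_nhdsWithin.1 htmem
    obtain ⟨r, hr, hball⟩ := Metric.isOpen_iff.1 hOopen z hzO
    have hfr : y ≤ f z r := by
      refine le_csInf ⟨ψ z, ⟨z, ⟨hz, mem_ball_self hr⟩, rfl⟩⟩ ?_
      rintro _ ⟨x, ⟨hxE, hxball⟩, rfl⟩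
      exact (hO x (hsubO ⟨hball hxball, hxE⟩)).le
    exact le_trans hfr (le_ciSup (hrange z) ⟨r, hr⟩)
  have hglsc : LowerSemicontinuous g := by
    intro z y hy
    obtain ⟨r, hr⟩ := exists_lt_of_lt_ciSup hy
    have hrpos : (0:ℝ) < r.1 / 2 := half_pos r.2
    filter_upwards [Metric.ball_mem_nhds z hrpos] with w hw
    have hball : ball w (r.1 / 2) ⊆ ball z r.1 := by
      intro v hv
      have h1 : dist v w < r.1 / 2 := mem_ball.1 hv
      have h2 : dist w z < r.1 / 2 := mem_ball.1 hw
      have : dist v z < r.1 := by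
        calc dist v z ≤ dist v w + dist w z := dist_triangle v w z
          _ < r.1 / 2 + r.1 / 2 := by linarith
          _ = r.1 := by ring
      exact mem_ball.2 this
    calc y < f z r.1 := hr
      _ ≤ f w (r.1 / 2) := hK z w r.1 (r.1/2) hball
      _ ≤ g w := le_ciSup (hrange w) ⟨r.1/2, hrpos⟩
  refine ⟨fun z => min c (g z), ?_, ?_, fun z => min_le_left _ _⟩
  · intro z y hy
    have hy1 : y < c := lt_of_lt_of_le hy (min_le_left _ _)
    have hy2 : y < g z := lt_of_lt_of_le hy (min_le_right _ _)
    filter_upwards [hglsc z y hy2] with w hw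
    exact lt_min hy1 hw
  · intro z hz
    show min c (g z) = ψ z
    rw [hgE z hz]
    exact min_eq_right (hsup z hz)

end PsiExt
section MainAux

open Filter Set

variable {n : ℕ}

lemma open_sep {D : Set (Cn n)} {u ψt : Cn n → ℝ} (hD : IsOpen D)
    (hu : UpperSemicontinuousOn u D) (hψ : LowerSemicontinuous ψt) :
    IsOpen {z | z ∈ D ∧ u z < ψt z} := by
  rw [isOpen_iff_mem_nhds]
  rintro x ⟨hxD, hxlt⟩
  obtain ⟨m, hm1, hm2⟩ := exists_between hxlt
  have h1 : ∀ᶠ w in 𝓝 x, w ∈ D := hD.mem_nhds hxD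
  have h2 : ∀ᶠ w in 𝓝 x, u w < m := by
    have := hu x hxD m hm1
    rwa [nhdsWithin_eq_nhds.2 (hD.mem_nhds hxD)] at this
  have h3 : ∀ᶠ w in 𝓝 x, m < ψt w := hψ x m hm2
  filter_upwards [h1, h2, h3] with w hw1 hw2 hw3
  exact ⟨hw1, hw2.trans hw3⟩

end MainAux

/-- For lower semicontinuous `ψ` on an arbitrary `E ⊆ D` there are a
lower semicontinuous extension `ψ̃ < 0` of `ψ` to an open neighborhood `V` of `E` and a
decreasing sequence of open sets `U j ⊇ E` with
`(lim_j ω*_α(·,U_j,D,ψ̃))* = ω*_α(·,E,D,ψ)` on `D`. -/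
theorem weighted_measure_open_approximation {n : ℕ} (A : AlphaForm n) (D E : Set (Cn n))
    (hD : IsAlphaRegularDomain A D) (hE : E ⊆ D) (ψ : Cn n → ℝ)
    (hbd : ∃ C : ℝ, ∀ z ∈ E, |ψ z| ≤ C) (hsup : ∃ c < (0 : ℝ), ∀ z ∈ E, ψ z ≤ c)
    (hlsc : LowerSemicontinuousOn ψ E) :
    ∃ V : Set (Cn n), IsOpen V ∧ E ⊆ V ∧
    ∃ ψt : Cn n → ℝ, LowerSemicontinuousOn ψt V ∧ (∀ z ∈ E, ψt z = ψ z) ∧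
      (∃ c < (0 : ℝ), ∀ z ∈ V, ψt z ≤ c) ∧
    ∃ U : ℕ → Set (Cn n), (∀ j, IsOpen (U j)) ∧ (∀ j, E ⊆ U j) ∧
      (∀ j, U (j + 1) ⊆ U j) ∧
    ∃ L : Cn n → ℝ,
      (∀ z : Cn n,
        Filter.Tendsto (fun j => omegaWStar A (U j) D ψt z) atTop (𝓝 (L z))) ∧
      ∀ z ∈ D, Filter.limsup L (𝓝 z) = omegaWStar A E D ψ z := by
  classical
  obtain ⟨hDopen, hDconn, hDbdd, ρ, hρ⟩ := hD
  obtain ⟨C, hC⟩ := hbd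
  obtain ⟨c, hc, hψc⟩ := hsup
  obtain ⟨ψt, hψt_lsc, hψt_eq, hψt_le⟩ := psi_ext hC hc hψc hlsc
  refine ⟨Set.univ, isOpen_univ, Set.subset_univ _, ψt,
    hψt_lsc.lowerSemicontinuousOn _, hψt_eq, ⟨c, hc, fun z _ => hψt_le z⟩, ?_⟩
  by_cases hcl : (Uclass A E D ψ).Nonempty
  case neg =>
    -- the extremal class is empty: everything is identically `0`.
    rw [Set.not_nonempty_iff_eq_empty] at hcl
    have hsub0 : Uclass A Set.univ D ψt ⊆ Uclass A E D ψ := by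
      rintro u ⟨h1, h2, h3⟩
      exact ⟨h1, fun z hz => (hψt_eq z hz) ▸ h2 z (Set.mem_univ z), h3⟩
    have hU0 : Uclass A Set.univ D ψt = ∅ :=
      Set.eq_empty_of_subset_empty (hcl ▸ hsub0)
    have hW0 : ∀ z, omegaW A Set.univ D ψt z = 0 := by
      intro z
      show sSup ((fun u : Cn n → ℝ => u z) '' Uclass A Set.univ D ψt) = 0
      rw [hU0, Set.image_empty, Real.sSup_empty]
    have hWe : ∀ z, omegaW A E D ψ z = 0 := by
      intro z
      show sSup ((fun u : Cn n → ℝ => u z) '' Uclass A E D ψ) = 0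
      rw [hcl, Set.image_empty, Real.sSup_empty]
    have hS0 : ∀ z, omegaWStar A Set.univ D ψt z = 0 := by
      intro z
      show Filter.limsup (omegaW A Set.univ D ψt) (𝓝 z) = 0
      rw [Filter.limsup_congr (Filter.Eventually.of_forall fun w => hW0 w)]
      exact Filter.limsup_const 0
    have hSe : ∀ z, omegaWStar A E D ψ z = 0 := by
      intro z
      show Filter.limsup (omegaW A E D ψ) (𝓝 z) = 0
      rw [Filter.limsup_congr (Filter.Eventually.of_forall fun w => hWe w)]
      exact Filter.limsup_const 0
    refine ⟨fun _ => Set.univ, fun _ => isOpen_univ, fun _ => Set.subset_univ _,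
      fun _ => subset_rfl, fun _ => 0, fun z => ?_, fun z _ => ?_⟩
    · simp only [hS0]
      exact tendsto_const_nhds
    · rw [hSe z]
      have : Filter.limsup (fun _ : Cn n => (0:ℝ)) (𝓝 z) = 0 := Filter.limsup_const 0
      simpa using this
  case pos =>
    obtain ⟨u₀, hu₀⟩ := hcl
    have hcl' : (Uclass A E D ψ).Nonempty := ⟨u₀, hu₀⟩
    have hex : ∀ (B : Set (Cn n)) (i : ℕ), ∃ v, v ∈ Uclass A E D ψ ∧
        ((B ∩ D).Nonempty → ∃ x ∈ B ∩ D,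
          sSup (omegaW A E D ψ '' (B ∩ D)) - 2 / (i + 1) < v x) := by
      intro B i
      by_cases hBD : (B ∩ D).Nonempty
      · have hpos : (0:ℝ) < 1 / ((i:ℝ) + 1) := by positivity
        have himg : (omegaW A E D ψ '' (B ∩ D)).Nonempty := hBD.image _
        have hbddimg : BddAbove (omegaW A E D ψ '' (B ∩ D)) := by
          refine ⟨0, ?_⟩
          rintro _ ⟨x, -, rfl⟩
          exact omegaW_nonpos hDopen hE x
        have h1 : sSup (omegaW A E D ψ '' (B ∩ D)) - 1 / ((i:ℝ)+1)
            < sSup (omegaW A E D ψ '' (B ∩ D)) := by linarith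
        obtain ⟨_, ⟨x, hxBD, rfl⟩, hx1⟩ := exists_lt_of_lt_csSup himg h1
        have h2' : omegaW A E D ψ x - 1 / ((i:ℝ)+1)
            < sSup ((fun u : Cn n → ℝ => u x) '' Uclass A E D ψ) := by
          have : omegaW A E D ψ x - 1 / ((i:ℝ)+1) < omegaW A E D ψ x := by linarith
          exact this
        obtain ⟨_, ⟨v, hv, rfl⟩, hv1⟩ := exists_lt_of_lt_csSup (hcl'.image _) h2'
        refine ⟨v, hv, fun _ => ⟨x, hxBD, ?_⟩⟩
        have h3 : 2 / ((i:ℝ) + 1) = 1/((i:ℝ)+1) + 1/((i:ℝ)+1) := by ring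
        rw [h3]
        linarith
      · exact ⟨u₀, hu₀, fun h => absurd h hBD⟩
    choose W hW1 hW2 using hex
    obtain ⟨bas, hbcnt, -, hbasis⟩ := TopologicalSpace.exists_countable_basis (Cn n)
    haveI := hbcnt.to_subtype
    have hbne : Nonempty bas := by
      obtain ⟨B, hB, -, -⟩ := hbasis.exists_subset_of_mem_open
        (Set.mem_univ (0 : Cn n)) isOpen_univ
      exact ⟨⟨B, hB⟩⟩
    obtain ⟨e, he⟩ := exists_surjective_nat (↥bas × ℕ)
    set v : ℕ → Cn n → ℝ := fun k => W ((e k).1 : Set (Cn n)) (e k).2 with hvdef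
    have hvF : ∀ k, v k ∈ Uclass A E D ψ := fun k => hW1 _ _
    set ε : ℕ → ℝ := fun j => 1 / ((j:ℝ) + 1) with hεdef
    have hεpos : ∀ j, 0 < ε j := fun j => by positivity
    have hεanti : ∀ j, ε (j+1) ≤ ε j := by
      intro j
      apply one_div_le_one_div_of_le (by positivity)
      push_cast
      linarith
    have hεlim : Filter.Tendsto ε atTop (𝓝 0) := tendsto_one_div_add_atTop_nhds_zero_nat
    set U : ℕ → Set (Cn n) :=
      fun j => ⋂ k ∈ Finset.range (j+1), {z | z ∈ D ∧ (1 + ε j) * v k z < ψt z} with hUdef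
    have hUsubD : ∀ j, U j ⊆ D := by
      intro j z hz
      exact (Set.mem_iInter₂.1 hz 0 (Finset.mem_range.2 (Nat.succ_pos j))).1
    have hUopen : ∀ j, IsOpen (U j) := by
      intro j
      refine isOpen_biInter_finset fun k _ => ?_
      exact open_sep hDopen
        (usc_real (smul_subh (hvF k).1 (by positivity : (0:ℝ) < 1 + ε j))) hψt_lsc
    have hEU : ∀ j, E ⊆ U j := by
      intro j z hz
      refine Set.mem_iInter₂.2 fun k _ => ⟨hE hz, ?_⟩
      have h1 : v k z ≤ ψ z := (hvF k).2.1 z hz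
      have h2 : v k z ≤ c := h1.trans (hψc z hz)
      have h3 : ε j * v k z ≤ ε j * c := mul_le_mul_of_nonneg_left h2 (hεpos j).le
      have h4 : ε j * c < 0 := mul_neg_of_pos_of_neg (hεpos j) hc
      have hexp : (1 + ε j) * v k z = v k z + ε j * v k z := by ring
      rw [hψt_eq z hz]
      linarith
    have hUdec : ∀ j, U (j+1) ⊆ U j := by
      intro j z hz
      have hzD : z ∈ D := hUsubD (j+1) hz
      refine Set.mem_iInter₂.2 fun k hk => ?_
      have hk' : k ∈ Finset.range (j+2) :=
        Finset.mem_range.2 (lt_of_lt_of_le (Finset.mem_range.1 hk) (by omega))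
      have h1 := (Set.mem_iInter₂.1 hz k hk').2
      refine ⟨hzD, lt_of_le_of_lt ?_ h1⟩
      have hv0 : v k z ≤ 0 := ((hvF k).2.2 z hzD).le
      exact mul_le_mul_of_nonpos_right (by linarith [hεanti j]) hv0
    have hmem : ∀ j k, k ≤ j → (fun z => (1 + ε j) * v k z) ∈ Uclass A (U j) D ψt := by
      intro j k hkj
      refine ⟨smul_subh (hvF k).1 (by positivity), fun z hz => ?_, fun z hz => ?_⟩
      · exact ((Set.mem_iInter₂.1 hz k (Finset.mem_range.2 (by omega))).2).le
      · exact mul_neg_of_pos_of_neg (by positivity) ((hvF k).2.2 z hz)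
    have hclne : ∀ j, (Uclass A (U j) D ψt).Nonempty := fun j => ⟨_, hmem j 0 (Nat.zero_le j)⟩
    have hUcl_sub : ∀ j, Uclass A (U j) D ψt ⊆ Uclass A E D ψ := by
      rintro j u ⟨h1, h2, h3⟩
      exact ⟨h1, fun z hz => (hψt_eq z hz) ▸ h2 z (hEU j hz), h3⟩
    have hUcl_mono : ∀ j, Uclass A (U j) D ψt ⊆ Uclass A (U (j+1)) D ψt := by
      rintro j u ⟨h1, h2, h3⟩
      exact ⟨h1, fun z hz => h2 z (hUdec j hz), h3⟩
    have hamono : ∀ z, Monotone fun j => omegaWStar A (U j) D ψt z := by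
      intro z
      apply monotone_nat_of_le_succ
      intro j
      exact omegaWStar_mono hDopen (hUsubD j) (hUsubD (j+1)) (hUcl_mono j) (hclne j) z
    have haneg : ∀ j z, omegaWStar A (U j) D ψt z ≤ 0 :=
      fun j z => omegaWStar_nonpos hDopen (hUsubD j) z
    refine ⟨U, hUopen, hEU, hUdec, fun z => ⨆ j, omegaWStar A (U j) D ψt z,
      fun z => ?_, ?_⟩
    · exact tendsto_atTop_ciSup (hamono z) ⟨0, by rintro _ ⟨j, rfl⟩; exact haneg j z⟩
    · intro z hz
      set L : Cn n → ℝ := fun w => ⨆ j, omegaWStar A (U j) D ψt w with hLdef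
      have hL0 : ∀ w, L w ≤ 0 := fun w => ciSup_le fun j => haneg j w
      have hLbddrange : ∀ w, BddAbove (Set.range fun j => omegaWStar A (U j) D ψt w) :=
        fun w => ⟨0, by rintro _ ⟨j, rfl⟩; exact haneg j w⟩
      have hLle : ∀ w, L w ≤ omegaWStar A E D ψ w :=
        fun w => ciSup_le fun j =>
          omegaWStar_mono hDopen (hUsubD j) hE (hUcl_sub j) (hclne j) w
      refine le_antisymm ?_ ?_
      · calc Filter.limsup L (𝓝 z)
            ≤ Filter.limsup (omegaWStar A E D ψ) (𝓝 z) :=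
              limsup_mono_fun (.of_forall hLle) (.of_forall (omegaWStar_nonpos hDopen hE))
          _ ≤ Filter.limsup (omegaW A E D ψ) (𝓝 z) :=
              limsup_limsup_le (omegaW_nonpos hDopen hE) z
          _ = omegaWStar A E D ψ z := rfl
      · have hstep1 : ∀ k j, k ≤ j → ∀ w, w ∈ D → (1 + ε j) * v k w ≤ L w := by
          intro k j hkj w hw
          calc (1 + ε j) * v k w ≤ omegaW A (U j) D ψt w := le_omegaW (hmem j k hkj) hw
            _ ≤ omegaWStar A (U j) D ψt w := omegaW_le_star hDopen (hUsubD j) w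
            _ ≤ L w := le_ciSup (hLbddrange w) j
        have hkey : ∀ k, ∀ w, w ∈ D → v k w ≤ Filter.limsup L (𝓝 w) := by
          intro k w hw
          refine le_of_forall_lt_imp_le_of_dense fun b hb => ?_
          have hfr : ∃ᶠ y in 𝓝 w, b < v k y := frequently_gt_of_lt (hvF k).1 hw hb
          have hev : ∀ᶠ y in 𝓝 w, y ∈ D := hDopen.mem_nhds hw
          have hfr2 : ∃ᶠ y in 𝓝 w, b < v k y ∧ y ∈ D := hfr.and_eventually hev
          have hjb : ∀ j, k ≤ j → (1 + ε j) * b ≤ Filter.limsup L (𝓝 w) := by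
            intro j hkj
            refine Filter.le_limsup_of_frequently_le ?_ (bddu_of_le L _ (.of_forall hL0))
            refine hfr2.mono ?_
            rintro y ⟨hby, hyD⟩
            have h1 : (1 + ε j) * b ≤ (1 + ε j) * v k y :=
              mul_le_mul_of_nonneg_left hby.le (by positivity)
            exact h1.trans (hstep1 k j hkj y hyD)
          have hlim : Filter.Tendsto (fun j => (1 + ε j) * b) atTop (𝓝 b) := by
            have h1 : Filter.Tendsto (fun j => 1 + ε j) atTop (𝓝 (1 + 0)) :=
              hεlim.const_add (1:ℝ)
            rw [add_zero] at h1
            have h3 := h1.mul_const b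
            rw [one_mul] at h3
            exact h3
          exact le_of_tendsto hlim (Filter.eventually_atTop.2 ⟨k, fun j hj => hjb j hj⟩)
        set s : Cn n → ℝ := fun w => ⨆ k, v k w with hsdef
        have hsbdd : ∀ w, w ∈ D → BddAbove (Set.range fun k => v k w) :=
          fun w hw => ⟨0, by rintro _ ⟨k, rfl⟩; exact ((hvF k).2.2 w hw).le⟩
        have hs0 : ∀ w, w ∈ D → s w ≤ 0 := fun w hw => ciSup_le fun k => ((hvF k).2.2 w hw).le
        have hsh : ∀ w, w ∈ D → s w ≤ Filter.limsup L (𝓝 w) :=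
          fun w hw => ciSup_le fun k => hkey k w hw
        have hchoq : Filter.limsup (omegaW A E D ψ) (𝓝 z) ≤ Filter.limsup s (𝓝 z) := by
          refine le_of_forall_lt_imp_le_of_dense fun b hb => ?_
          have hfr : ∃ᶠ w in 𝓝 z, b < omegaW A E D ψ w :=
            Filter.frequently_lt_of_lt_limsup (cobdd_nhds _ z) hb
          have hsbd2 : Filter.IsBoundedUnder (· ≤ ·) (𝓝 z) s := by
            refine bddu_of_le s _ ?_
            filter_upwards [hDopen.mem_nhds hz] with w hw
            exact hs0 w hw
          refine Filter.le_limsup_of_frequently_le (Filter.frequently_iff.2 ?_) hsbd2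
          intro G hG
          obtain ⟨O', hO'sub, hO'open, hzO'⟩ := _root_.mem_nhds_iff.1 hG
          have hOopen : IsOpen (O' ∩ D) := hO'open.inter hDopen
          have hOmem : O' ∩ D ∈ 𝓝 z := hOopen.mem_nhds ⟨hzO', hz⟩
          obtain ⟨w, hbw, hwO⟩ :=
            (hfr.and_eventually (eventually_of_mem hOmem fun y hy => hy)).exists
          obtain ⟨B, hBbas, hwB, hBO⟩ := hbasis.exists_subset_of_mem_open hwO hOopen
          have hwBD : w ∈ B ∩ D := ⟨hwB, hwO.2⟩
          have hBDne : (B ∩ D).Nonempty := ⟨w, hwBD⟩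
          have hbddimg : BddAbove (omegaW A E D ψ '' (B ∩ D)) := by
            refine ⟨0, ?_⟩
            rintro _ ⟨x, -, rfl⟩
            exact omegaW_nonpos hDopen hE x
          have hbt : b < sSup (omegaW A E D ψ '' (B ∩ D)) :=
            lt_of_lt_of_le hbw (le_csSup hbddimg ⟨w, hwBD, rfl⟩)
          obtain ⟨i, hi⟩ := exists_nat_gt (2 / (sSup (omegaW A E D ψ '' (B ∩ D)) - b))
          have hib : 2 / ((i:ℝ) + 1) < sSup (omegaW A E D ψ '' (B ∩ D)) - b := by
            have h1 : (0:ℝ) < sSup (omegaW A E D ψ '' (B ∩ D)) - b := by linarith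
            rw [div_lt_iff₀ (by positivity : (0:ℝ) < (i:ℝ)+1)]
            rw [div_lt_iff₀ h1] at hi
            nlinarith
          obtain ⟨x, hxBD, hx⟩ := hW2 B i hBDne
          obtain ⟨k, hk⟩ := he (⟨B, hBbas⟩, i)
          have hvk : v k = W B i := by
            show W ((e k).1 : Set (Cn n)) (e k).2 = W B i
            rw [hk]
          refine ⟨x, hO'sub (hBO hxBD.1).1, ?_⟩
          have h2 : b ≤ v k x := by
            rw [hvk]
            linarith
          exact h2.trans (le_ciSup (hsbdd x hxBD.2) k)
        calc omegaWStar A E D ψ z = Filter.limsup (omegaW A E D ψ) (𝓝 z) := rfl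
          _ ≤ Filter.limsup s (𝓝 z) := hchoq
          _ ≤ Filter.limsup (fun w => Filter.limsup L (𝓝 w)) (𝓝 z) := by
              refine limsup_mono_fun ?_ ?_
              · filter_upwards [hDopen.mem_nhds hz] with w hw
                exact hsh w hw
              · exact .of_forall fun w => limsup_nonpos (.of_forall hL0)
          _ ≤ Filter.limsup L (𝓝 z) := limsup_limsup_le hL0 z
end

section
/- Let D ⊂ ℂⁿ be a bounded α-regular domain, let E ⋐ D be relatively compact in D, and let ψ be a bounded function on E with sup_E ψ < 0. Then lim_{z→∂D, z∈D} ω*_α(z,E,D,ψ) = 0. -/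
open MeasureTheory Filter Topology Complex Metric

section Aux

open Filter

private lemma usc_of_coe' {n : ℕ} {D : Set (Cn n)} {u : Cn n → ℝ}
    (h : UpperSemicontinuousOn (fun z => ((u z : ℝ) : EReal)) D) :
    UpperSemicontinuousOn u D := by
  intro z hz y hy
  have h2 := h z hz (y : EReal) (EReal.coe_lt_coe_iff.mpr hy)
  exact h2.mono fun w hw => EReal.coe_lt_coe_iff.mp hw

private lemma coe_usc' {n : ℕ} {D : Set (Cn n)} {u : Cn n → ℝ}
    (h : UpperSemicontinuousOn u D) :
    UpperSemicontinuousOn (fun z => ((u z : ℝ) : EReal)) D := by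
  intro z hz y hy
  induction y with
  | bot => exact absurd hy (by simp)
  | coe b =>
      have h2 := h z hz b (EReal.coe_lt_coe_iff.mp hy)
      exact h2.mono fun w hw => EReal.coe_lt_coe_iff.mpr hw
  | top => filter_upwards with w using EReal.coe_lt_top _

private lemma limsup_coe_const_mul' {α : Type*} {F : Filter α} {u : α → ℝ} {M : ℝ}
    (hM : 0 < M) {c : ℝ}
    (h : Filter.limsup (fun x => ((u x : ℝ) : EReal)) F = ((c : ℝ) : EReal)) :
    Filter.limsup (fun x => ((M * u x : ℝ) : EReal)) F = ((M * c : ℝ) : EReal) := by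
  apply le_antisymm
  · by_contra hlt
    push_neg at hlt
    obtain ⟨b, hb1, hb2⟩ := EReal.exists_between_coe_real hlt
    have hfreq : ∃ᶠ x in F, (b : EReal) < ((M * u x : ℝ) : EReal) :=
      Filter.frequently_lt_of_lt_limsup (by isBoundedDefault) hb2
    have hfreq' : ∃ᶠ x in F, ((b / M : ℝ) : EReal) ≤ ((u x : ℝ) : EReal) := by
      refine hfreq.mono fun x hx => ?_
      have hx' : b < M * u x := by exact_mod_cast hx
      exact_mod_cast ((div_lt_iff₀' hM).mpr hx').le
    have hle := Filter.le_limsup_of_frequently_le' hfreq'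
    rw [h] at hle
    have hle' : b / M ≤ c := by exact_mod_cast hle
    have : b ≤ M * c := (div_le_iff₀' hM).mp hle'
    exact absurd hb1 (by exact_mod_cast this.not_gt)
  · by_contra hlt
    push_neg at hlt
    obtain ⟨b, hb1, hb2⟩ := EReal.exists_between_coe_real hlt
    have hev : ∀ᶠ x in F, ((M * u x : ℝ) : EReal) < (b : EReal) :=
      Filter.eventually_lt_of_limsup_lt hb1 (by isBoundedDefault)
    have hev' : ∀ᶠ x in F, ((u x : ℝ) : EReal) ≤ ((b / M : ℝ) : EReal) := by
      refine hev.mono fun x hx => ?_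
      have hx' : M * u x < b := by exact_mod_cast hx
      exact_mod_cast ((lt_div_iff₀' hM).mpr hx').le
    have hle := Filter.limsup_le_of_le (by isBoundedDefault) hev'
    rw [h] at hle
    have hle' : c ≤ b / M := by exact_mod_cast hle
    have : M * c ≤ b := (le_div_iff₀' hM).mp hle'
    exact absurd hb2 (by exact_mod_cast this.not_gt)

private lemma alphaSub_const_mul {n : ℕ} {A : AlphaForm n} {D : Set (Cn n)}
    {u : Cn n → ℝ} {M : ℝ} (hM : 0 < M) (hu : IsAlphaSubharmonic A D u) :
    IsAlphaSubharmonic A D (fun z => M * u z) := by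
  obtain ⟨h1, h2, h3, h4, h5⟩ := hu
  refine ⟨fun z _ => EReal.coe_ne_top _, ?_, ?_, ?_, ?_⟩
  · exact coe_usc' (by
      intro z hz y hy
      have hy' : u z < y / M := (lt_div_iff₀' hM).mpr hy
      have := usc_of_coe' h2 z hz (y / M) hy'
      exact this.mono fun w hw => (lt_div_iff₀' hM).mp hw)
  · intro z₀ hz₀ S hS
    exact limsup_coe_const_mul' hM (h3 z₀ hz₀ S hS)
  · simp only [EReal.toReal_coe] at h4 ⊢
    intro x hx
    obtain ⟨s, hs, hint⟩ := h4 x hx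
    exact ⟨s, hs, hint.const_mul M⟩
  · intro ω hω1 hω2 hω3 hω4
    have h5' := h5 ω hω1 hω2 hω3 hω4
    simp only [EReal.toReal_coe] at h5' ⊢
    have heq : ∀ z, M * u z * alphaOpR A ω z = M * (u z * alphaOpR A ω z) :=
      fun z => mul_assoc _ _ _
    simp_rw [heq, MeasureTheory.integral_const_mul]
    exact mul_nonneg hM.le h5'

end Aux

/-- If `E ⋐ D` is relatively compact in the bounded `α`-regular domain
`D`, then `ω*_α(z,E,D,ψ) → 0` as `z → ∂D` from inside `D`. -/
theorem weighted_measure_boundary_limit {n : ℕ} (A : AlphaForm n) (D E : Set (Cn n))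
    (hD : IsAlphaRegularDomain A D) (hEc : IsCompact (closure E)) (hE : closure E ⊆ D)
    (ψ : Cn n → ℝ) (hbd : ∃ C : ℝ, ∀ z ∈ E, |ψ z| ≤ C)
    (hsup : ∃ c < (0 : ℝ), ∀ z ∈ E, ψ z ≤ c) :
    ∀ ζ ∈ frontier D, Filter.Tendsto (omegaWStar A E D ψ) (𝓝[D] ζ) (𝓝 0) := by
  obtain ⟨hDo, hDc, hDb, ρ, hρsh, hρneg, hρlim⟩ := hD
  obtain ⟨C, hC⟩ := hbd
  have hρusc : UpperSemicontinuousOn ρ D := usc_of_coe' hρsh.2.1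
  -- a negative upper bound for ρ on closure E
  obtain ⟨δ, hδ0, hδ⟩ : ∃ δ < (0 : ℝ), ∀ z ∈ closure E, ρ z ≤ δ := by
    rcases (closure E).eq_empty_or_nonempty with hE0 | hE0
    · exact ⟨-1, by norm_num, by simp [hE0]⟩
    · have hU : ∀ (z : Cn n) (hz : z ∈ closure E), {w | ρ w < ρ z / 2} ∈ 𝓝 z := by
        intro z hz
        have hzD : z ∈ D := hE hz
        have hnb : 𝓝[D] z = 𝓝 z := nhdsWithin_eq_nhds.mpr (hDo.mem_nhds hzD)
        have := hρusc z hzD (ρ z / 2) (by linarith [hρneg z hzD])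
        rw [hnb] at this
        exact this
      obtain ⟨t, hcov⟩ := hEc.elim_nhds_subcover' (fun z hz => {w | ρ w < ρ z / 2}) hU
      have ht : t.Nonempty := by
        rcases hE0 with ⟨w, hw⟩
        rcases Set.mem_iUnion₂.mp (hcov hw) with ⟨z, hzt, _⟩
        exact ⟨z, hzt⟩
      refine ⟨t.sup' ht (fun z => ρ (z : Cn n) / 2), ?_, ?_⟩
      · rw [Finset.sup'_lt_iff]
        intro z _
        have : ρ (z : Cn n) < 0 := hρneg _ (hE z.2)
        linarith
      · intro w hw
        rcases Set.mem_iUnion₂.mp (hcov hw) with ⟨z, hzt, hwz⟩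
        exact le_trans (le_of_lt hwz) (Finset.le_sup' (fun z : ↥(closure E) => ρ (z : Cn n) / 2) hzt)
  set M : ℝ := max (C / (-δ)) 1 with hMdef
  have hM0 : (0 : ℝ) < M := lt_of_lt_of_le one_pos (le_max_right _ _)
  have hmem : (fun z => M * ρ z) ∈ Uclass A E D ψ := by
    refine ⟨alphaSub_const_mul hM0 hρsh, ?_, ?_⟩
    · intro z hz
      have hC0 : (0 : ℝ) ≤ C := le_trans (abs_nonneg _) (hC z hz)
      have h1 : ρ z ≤ δ := hδ z (subset_closure hz)
      have h2 : M * ρ z ≤ M * δ := mul_le_mul_of_nonneg_left h1 hM0.le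
      have h3 : C / (-δ) ≤ M := le_max_left _ _
      have h4 : C ≤ M * (-δ) := by
        rw [div_le_iff₀ (by linarith : (0:ℝ) < -δ)] at h3
        linarith
      have h5 : M * δ ≤ -C := by linarith [h4]
      have h6 : -C ≤ ψ z := neg_le_of_abs_le (hC z hz)
      show M * ρ z ≤ ψ z
      linarith
    · intro z hz
      exact mul_neg_of_pos_of_neg hM0 (hρneg z hz)
  have hbdd : ∀ z ∈ D, (0 : ℝ) ∈ upperBounds ((fun u : Cn n → ℝ => u z) '' Uclass A E D ψ) := by
    rintro z hz x ⟨u, hu, rfl⟩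
    exact (hu.2.2 z hz).le
  have hub : ∀ z ∈ D, omegaW A E D ψ z ≤ 0 := fun z hz =>
    Real.sSup_nonpos (hbdd z hz)
  have hlb : ∀ z ∈ D, M * ρ z ≤ omegaW A E D ψ z := fun z hz =>
    le_csSup ⟨0, hbdd z hz⟩ ⟨_, hmem, rfl⟩
  have hbU : ∀ z ∈ D, Filter.IsBoundedUnder (· ≤ ·) (𝓝 z) (omegaW A E D ψ) := by
    intro z hz
    refine ⟨0, ?_⟩
    rw [Filter.eventually_map]
    filter_upwards [hDo.mem_nhds hz] with w hw using hub w hw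
  have hstar_ub : ∀ z ∈ D, omegaWStar A E D ψ z ≤ 0 := by
    intro z hz
    have hcb : Filter.IsCoboundedUnder (· ≤ ·) (𝓝 z) (omegaW A E D ψ) := by
      refine ⟨omegaW A E D ψ z, fun a ha => ?_⟩
      rw [Filter.eventually_map] at ha
      exact ha.self_of_nhds
    refine Filter.limsup_le_of_le hcb ?_
    filter_upwards [hDo.mem_nhds hz] with w hw using hub w hw
  have hstar_lb : ∀ z ∈ D, omegaW A E D ψ z ≤ omegaWStar A E D ψ z := by
    intro z hz
    refine Filter.le_limsup_of_frequently_le ?_ (hbU z hz)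
    exact Filter.frequently_iff.mpr fun hU => ⟨z, mem_of_mem_nhds hU, le_refl _⟩
  intro ζ hζ
  have hT : Filter.Tendsto (fun z => M * ρ z) (𝓝[D] ζ) (𝓝 0) := by
    have := (hρlim ζ hζ).const_mul M
    simpa using this
  refine tendsto_of_tendsto_of_tendsto_of_le_of_le' hT tendsto_const_nhds ?_ ?_
  · filter_upwards [self_mem_nhdsWithin] with z hz
    exact le_trans (hlb z hz) (hstar_lb z hz)
  · filter_upwards [self_mem_nhdsWithin] with z hz using hstar_ub z hz
end

section
/- Let D ⊂ ℂⁿ be a bounded α-regular domain and let {K_j} be a sequence of compact subsets of D with K_{j+1} ⊂ K_j. Let ψ be a bounded lower semicontinuous function on K₁ with sup_{K₁} ψ < 0. Then lim_{j→∞} ω_α(z,K_j,D,ψ) = ω_α(z, ⋂_{j=1}^∞ K_j, D, ψ) for all z ∈ D. -/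
open MeasureTheory Filter Topology Complex Metric

section Helpers

variable {X : Type*} [TopologicalSpace X]

lemma usc_real_of_ereal {f : X → ℝ} {s : Set X}
    (h : UpperSemicontinuousOn (fun z => (f z : EReal)) s) :
    UpperSemicontinuousOn f s := fun x hx y hy =>
  (h x hx (y : EReal) (EReal.coe_lt_coe_iff.2 hy)).mono fun _ hz =>
    EReal.coe_lt_coe_iff.1 hz

lemma usc_ereal_of_real {f : X → ℝ} {s : Set X}
    (h : UpperSemicontinuousOn f s) :
    UpperSemicontinuousOn (fun z => (f z : EReal)) s := by
  intro x hx y hy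
  induction y using EReal.rec with
  | bot => exact absurd hy (by simp)
  | coe r =>
    exact (h x hx r (EReal.coe_lt_coe_iff.1 hy)).mono fun z hz => EReal.coe_lt_coe_iff.2 hz
  | top => exact Filter.Eventually.of_forall fun z => EReal.coe_lt_top _

lemma usc_const_mul {f : X → ℝ} {s : Set X} {t : ℝ} (ht : 0 < t)
    (h : UpperSemicontinuousOn f s) :
    UpperSemicontinuousOn (fun z => t * f z) s := by
  intro x hx y hy
  have hx' : f x < y / t := by
    rw [lt_div_iff₀ ht, mul_comm]; exact hy
  exact (h x hx _ hx').mono fun z hz => by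
    show t * f z < y
    rw [mul_comm]; exact (lt_div_iff₀ ht).1 hz

lemma ereal_limsup_const_mul {ι : Type*} {F : Filter ι} {f : ι → ℝ} {t a : ℝ} (ht : 0 < t)
    (h : Filter.limsup (fun z => (f z : EReal)) F = (a : EReal)) :
    Filter.limsup (fun z => ((t * f z : ℝ) : EReal)) F = ((t * a : ℝ) : EReal) := by
  rcases F.eq_or_neBot with rfl | hne
  · simp only [Filter.limsup_bot] at h
    exact absurd h.symm (EReal.coe_ne_bot a)
  · set g : EReal → EReal := fun x => (t : EReal) * x with hg
    have g_mono : Monotone g := fun x y hxy =>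
      mul_le_mul_of_nonneg_left hxy (by exact_mod_cast ht.le)
    have g_cont : ContinuousAt g ((a : EReal)) := by
      have : ContinuousAt (fun p : EReal × EReal => p.1 * p.2) ((t : EReal), (a : EReal)) :=
        EReal.continuousAt_mul (p := ((t : EReal), (a : EReal)))
          (Or.inl (by simp [EReal.coe_eq_zero]; exact ht.ne')) (Or.inl (by simp [EReal.coe_eq_zero]; exact ht.ne'))
          (Or.inl (by simp)) (Or.inl (by simp))
      exact this.comp (Continuous.continuousAt (by fun_prop))
    have := g_mono.map_limsup_of_continuousAt (F := F) (fun z => (f z : EReal))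
      (by rw [h]; exact g_cont)
    rw [h] at this
    have hfun : (g ∘ fun z => (f z : EReal)) = fun z => ((t * f z : ℝ) : EReal) := by
      funext z; simp [hg, EReal.coe_mul]
    rw [hfun] at this
    rw [← this, hg]
    simp [EReal.coe_mul]

/-- An upper semicontinuous, everywhere-negative function is bounded away from `0`
on a nonempty compact subset. -/
lemma exists_neg_bound {n : ℕ} {f : Cn n → ℝ} {D K : Set (Cn n)}
    (husc : UpperSemicontinuousOn f D) (hneg : ∀ z ∈ D, f z < 0)
    (hK : IsCompact K) (hKD : K ⊆ D) (hne : K.Nonempty) :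
    ∃ m < (0 : ℝ), ∀ w ∈ K, f w ≤ m := by
  have hcover : ∀ x ∈ K, {w | w ∈ D → f w < f x / 2} ∈ 𝓝 x := by
    intro x hx
    have h1 : f x < f x / 2 := by linarith [hneg x (hKD hx)]
    have := husc x (hKD hx) (f x / 2) h1
    rw [eventually_nhdsWithin_iff] at this
    exact this
  obtain ⟨t, hcov⟩ := hK.elim_nhds_subcover' (fun x _ => {w | w ∈ D → f w < f x / 2}) hcover
  obtain ⟨w0, hw0⟩ := hne
  have htne : t.Nonempty := by
    rcases Set.mem_iUnion₂.1 (hcov hw0) with ⟨x, hxt, _⟩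
    exact ⟨x, hxt⟩
  refine ⟨t.sup' htne (fun x => f x.1 / 2), ?_, ?_⟩
  · rw [Finset.sup'_lt_iff]
    intro x _
    linarith [hneg x.1 (hKD x.2)]
  · intro w hw
    rcases Set.mem_iUnion₂.1 (hcov hw) with ⟨x, hxt, hwx⟩
    exact le_trans (hwx (hKD hw)).le (Finset.le_sup' (fun x => f x.1 / 2) hxt)

/-- Scaling an `α`-subharmonic function by a positive constant. -/
lemma isAlphaSubharmonic_const_mul {n : ℕ} {A : AlphaForm n} {D : Set (Cn n)} {u : Cn n → ℝ}
    {t : ℝ} (ht : 0 < t) (hu : IsAlphaSubharmonic A D u) :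
    IsAlphaSubharmonic A D (fun z => t * u z) := by
  obtain ⟨h1, h2, h3, h4, h5⟩ := hu
  refine ⟨fun z _ => EReal.coe_ne_top _, ?_, ?_, ?_, ?_⟩
  · exact usc_ereal_of_real (usc_const_mul ht (usc_real_of_ereal h2))
  · intro z₀ hz₀ S hS
    exact ereal_limsup_const_mul ht (h3 z₀ hz₀ S hS)
  · intro x hx
    obtain ⟨sset, hsmem, hint⟩ := h4 x hx
    refine ⟨sset, hsmem, ?_⟩
    simp only [EReal.toReal_coe] at hint ⊢
    exact hint.const_mul t
  · intro ω hω1 hω2 hω3 hω4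
    simp only [EReal.toReal_coe] at h5 ⊢
    have : ∀ z, (t * u z) * alphaOpR A ω z = t * (u z * alphaOpR A ω z) := fun z => by ring
    simp only [this]
    rw [MeasureTheory.integral_const_mul]
    exact mul_nonneg ht.le (h5 ω hω1 hω2 hω3 hω4)

end Helpers

/-- For a decreasing sequence of compacts `K_{j+1} ⊆ K_j ⊆ D` and a
bounded lower semicontinuous weight `ψ` on `K 0` with `sup ψ < 0`,
`ω_α(z,K_j,D,ψ) → ω_α(z,⋂_j K_j,D,ψ)` for every `z ∈ D`. -/
theorem weighted_extremal_decreasing_compacts {n : ℕ} (A : AlphaForm n) (D : Set (Cn n))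
    (hD : IsAlphaRegularDomain A D) (K : ℕ → Set (Cn n))
    (hKc : ∀ j, IsCompact (K j)) (hKD : ∀ j, K j ⊆ D) (hmono : ∀ j, K (j + 1) ⊆ K j)
    (ψ : Cn n → ℝ) (hbd : ∃ C : ℝ, ∀ z ∈ K 0, |ψ z| ≤ C)
    (hsup : ∃ c < (0 : ℝ), ∀ z ∈ K 0, ψ z ≤ c)
    (hlsc : LowerSemicontinuousOn ψ (K 0)) :
    ∀ z ∈ D, Filter.Tendsto (fun j => omegaW A (K j) D ψ z) atTop
      (𝓝 (omegaW A (⋂ j, K j) D ψ z)) := by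
  intro z hz
  obtain ⟨hDopen, _hDconn, _hDbdd, ρ, hρsub, hρneg, _hρbd⟩ := hD
  obtain ⟨C, hC⟩ := hbd
  obtain ⟨c, hc0, hc⟩ := hsup
  have hKanti : Antitone K := antitone_nat_of_succ_le fun j => hmono j
  have hKj0 : ∀ j, K j ⊆ K 0 := fun j => hKanti (Nat.zero_le j)
  have hIK0 : (⋂ i, K i) ⊆ K 0 := Set.iInter_subset K 0
  simp only [omegaW]
  by_cases hK0 : (K 0).Nonempty
  swap
  · rw [Set.not_nonempty_iff_eq_empty] at hK0
    have h1 : ∀ j, K j = ∅ := fun j => Set.eq_empty_of_subset_empty (hK0 ▸ hKj0 j)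
    have h2 : (⋂ i, K i) = ∅ := Set.eq_empty_of_subset_empty (hK0 ▸ hIK0)
    have h3 : ∀ j, Uclass A (K j) D ψ = Uclass A (⋂ i, K i) D ψ := fun j => by
      rw [h1 j, h2]
    simp only [h3]
    exact tendsto_const_nhds
  have hρusc : UpperSemicontinuousOn ρ D := usc_real_of_ereal hρsub.2.1
  obtain ⟨m, hm0, hmK⟩ := exists_neg_bound hρusc hρneg (hKc 0) (hKD 0) hK0
  obtain ⟨w1, hw1⟩ := hK0
  have hCpos : 0 < C := by linarith [hc w1 hw1, neg_le_abs (ψ w1), hC w1 hw1]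
  set M : ℝ := C / (-m) with hM
  have hMpos : 0 < M := div_pos hCpos (neg_pos.2 hm0)
  set u₀ : Cn n → ℝ := fun w => M * ρ w with hu₀def
  have hu₀mem : ∀ E : Set (Cn n), E ⊆ K 0 → u₀ ∈ Uclass A E D ψ := by
    intro E hE
    refine ⟨isAlphaSubharmonic_const_mul hMpos hρsub, ?_, ?_⟩
    · intro w hw
      have h1 : ρ w ≤ m := hmK w (hE hw)
      have h2 : M * ρ w ≤ M * m := mul_le_mul_of_nonneg_left h1 hMpos.le
      have h3 : M * m = -C := by
        rw [hM, div_mul_eq_mul_div, div_eq_iff (neg_ne_zero.2 hm0.ne)]; ring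
      have h4 : -C ≤ ψ w := (abs_le.1 (hC w (hE hw))).1
      calc u₀ w ≤ M * m := h2
        _ = -C := h3
        _ ≤ ψ w := h4
    · intro w hw
      exact mul_neg_of_pos_of_neg hMpos (hρneg w hw)
  have hbddA : ∀ E : Set (Cn n), BddAbove ((fun u : Cn n → ℝ => u z) '' Uclass A E D ψ) := by
    intro E
    refine ⟨0, ?_⟩
    rintro x ⟨u, hu, rfl⟩
    exact (hu.2.2 z hz).le
  have hne : ∀ E : Set (Cn n), E ⊆ K 0 →
      ((fun u : Cn n → ℝ => u z) '' Uclass A E D ψ).Nonempty :=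
    fun E hE => ⟨u₀ z, Set.mem_image_of_mem _ (hu₀mem E hE)⟩
  have hsubcl : ∀ E E' : Set (Cn n), E' ⊆ E → Uclass A E D ψ ⊆ Uclass A E' D ψ :=
    fun E E' h u hu => ⟨hu.1, fun w hw => hu.2.1 w (h hw), hu.2.2⟩
  have a_le : ∀ j, sSup ((fun u : Cn n → ℝ => u z) '' Uclass A (K j) D ψ) ≤
      sSup ((fun u : Cn n → ℝ => u z) '' Uclass A (⋂ i, K i) D ψ) := fun j =>
    csSup_le_csSup (hbddA _) (hne (K j) (hKj0 j))
      (Set.image_mono (hsubcl (K j) _ (Set.iInter_subset K j)))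
  have a_mono : Monotone fun j => sSup ((fun u : Cn n → ℝ => u z) '' Uclass A (K j) D ψ) :=
    monotone_nat_of_le_succ fun j =>
      csSup_le_csSup (hbddA _) (hne (K j) (hKj0 j)) (Set.image_mono (hsubcl _ _ (hmono j)))
  have key : ∀ u ∈ Uclass A (⋂ i, K i) D ψ, ∀ η > (0:ℝ), ∃ j,
      u z - η ≤ sSup ((fun u : Cn n → ℝ => u z) '' Uclass A (K j) D ψ) := by
    intro u hu η hη
    obtain ⟨husub, huψ, huneg⟩ := hu
    have husc : UpperSemicontinuousOn u D := usc_real_of_ereal husub.2.1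
    have hc' : (0:ℝ) < -c := by linarith
    set δ : ℝ := min 1 (η / (|u z| + 1)) with hδdef
    have habs : (0:ℝ) ≤ |u z| := abs_nonneg _
    have hδpos : 0 < δ := lt_min one_pos (div_pos hη (by linarith))
    have hδ1 : δ ≤ 1 := min_le_left _ _
    have hδη : δ * |u z| ≤ η := by
      have h1 : δ ≤ η / (|u z| + 1) := min_le_right _ _
      have h2 : δ * |u z| ≤ (η / (|u z| + 1)) * |u z| := mul_le_mul_of_nonneg_right h1 habs
      have h3 : (η / (|u z| + 1)) * |u z| ≤ η := by
        rw [div_mul_eq_mul_div, div_le_iff₀ (by linarith)]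
        nlinarith
      linarith
    set ε : ℝ := δ * (-c) / 2 with hεdef
    have hεpos : 0 < ε := by
      have := mul_pos hδpos hc'; rw [hεdef]; linarith
    have hεc : ε ≤ -c / 2 := by
      have := mul_le_mul_of_nonneg_right hδ1 hc'.le
      rw [hεdef]; linarith
    have hnbhd : ∀ x ∈ ⋂ i, K i, ∀ᶠ w in 𝓝[K 0] x, u w < ψ w + ε := by
      intro x hx
      have hxK0 : x ∈ K 0 := hIK0 hx
      have hxD : x ∈ D := hKD 0 hxK0
      have h1 : ∀ᶠ w in 𝓝[D] x, u w < u x + ε / 2 := husc x hxD _ (by linarith)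
      have h1' : ∀ᶠ w in 𝓝[K 0] x, u w < u x + ε / 2 :=
        h1.filter_mono (nhdsWithin_mono x (hKD 0))
      have h2 : ∀ᶠ w in 𝓝[K 0] x, ψ x - ε / 2 < ψ w := hlsc x hxK0 _ (by linarith)
      filter_upwards [h1', h2] with w hw1 hw2
      have := huψ x hx
      linarith
    have hUex : ∀ x ∈ ⋂ i, K i, ∃ V : Set (Cn n),
        IsOpen V ∧ x ∈ V ∧ ∀ w ∈ V ∩ K 0, u w < ψ w + ε := by
      intro x hx
      have h := hnbhd x hx
      rw [eventually_nhdsWithin_iff] at h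
      obtain ⟨V, hVsub, hVopen, hxV⟩ := _root_.eventually_nhds_iff.1 h
      exact ⟨V, hVopen, hxV, fun w hw => hVsub w hw.1 hw.2⟩
    choose! V hVopen hxV hVP using hUex
    have hUopen : IsOpen (⋃ x ∈ ⋂ i, K i, V x) := isOpen_biUnion fun x hx => hVopen x hx
    obtain ⟨j, hjU⟩ : ∃ j, K j ⊆ ⋃ x ∈ ⋂ i, K i, V x := by
      apply exists_subset_nhds_of_isCompact' hKanti.directed_ge hKc
        (fun i => (hKc i).isClosed)
      intro x hx
      exact hUopen.mem_nhds (Set.mem_biUnion hx (hxV x hx))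
    refine ⟨j, ?_⟩
    have hvmem : (fun w => (1 + δ) * u w) ∈ Uclass A (K j) D ψ := by
      refine ⟨isAlphaSubharmonic_const_mul (by linarith) husub, ?_, ?_⟩
      · intro w hw
        have hwK0 : w ∈ K 0 := hKj0 j hw
        obtain ⟨x, hx, hwV⟩ := Set.mem_iUnion₂.1 (hjU hw)
        have h1 : u w < ψ w + ε := hVP x hx w ⟨hwV, hwK0⟩
        have h2 : ψ w ≤ c := hc w hwK0
        have h3 : u w ≤ c / 2 := by linarith
        have h4 : δ * u w ≤ δ * (c / 2) := mul_le_mul_of_nonneg_left h3 hδpos.le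
        have h5 : δ * (c / 2) = -ε := by rw [hεdef]; ring
        have h6 : (1 + δ) * u w = u w + δ * u w := by ring
        show (1 + δ) * u w ≤ ψ w
        linarith
      · intro w hw
        exact mul_neg_of_pos_of_neg (by linarith) (huneg w hw)
    have h6 : u z - η ≤ (1 + δ) * u z := by
      have h7 : |u z| = -u z := abs_of_neg (huneg z hz)
      nlinarith [hδη]
    exact le_trans h6 (le_csSup (hbddA _) (Set.mem_image_of_mem _ hvmem))
  rw [Metric.tendsto_atTop]
  intro ε' hε'
  obtain ⟨b, ⟨u, hu, rfl⟩, hb⟩ := exists_lt_of_lt_csSup (hne _ hIK0)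
    (show sSup ((fun u : Cn n → ℝ => u z) '' Uclass A (⋂ i, K i) D ψ) - ε'/2 <
      sSup ((fun u : Cn n → ℝ => u z) '' Uclass A (⋂ i, K i) D ψ) by linarith)
  obtain ⟨j0, hj0⟩ := key u hu (ε'/2) (by linarith)
  refine ⟨j0, fun j hj => ?_⟩
  have h8 := a_mono hj
  have h9 := a_le j
  rw [Real.dist_eq, abs_lt]
  constructor <;> simp only at h8 h9 ⊢ <;> linarith [hb, hj0]
end
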